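/- arXiv:2005.10688 — 9 statements merged into one kernel-verified Lean document; each statement's English description precedes it below -/
import Mathlib

section
/- Let X(s,u)=β(s)+u·w(s) be a non-cylindrical ruled surface parametrized by its line of striction. Suppose there exist c∈ℝ, a skew-symmetric linear map A:ℝ³→ℝ³ and v∈ℝ³ such that the soliton equation ⟨c·X(s,u)+A(X(s,u))+v, N(s,u)⟩ = H(s,u) holds for all s∈I and all u∈ℝ with λ(s)²+u²>0. Then the mean curvature vanishes identically, i.e. λ(s)F(s)+λ(s)²J(s)+u·λ'(s)+u²·J(s)=0 for all s∈I and u∈ℝ; in other words X is a trivial (minimal) solution. -/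
noncomputable section

/-- The Euclidean inner product on `ℝ³`. -/
def dot3 (x y : Fin 3 → ℝ) : ℝ := x 0 * y 0 + x 1 * y 1 + x 2 * y 2

/-- The cross product on `ℝ³`. -/
def cross3 (x y : Fin 3 → ℝ) : Fin 3 → ℝ :=
  ![x 1 * y 2 - x 2 * y 1, x 2 * y 0 - x 0 * y 2, x 0 * y 1 - x 1 * y 0]

/-- The Euclidean norm on `ℝ³`. -/
def norm3 (x : Fin 3 → ℝ) : ℝ := Real.sqrt (dot3 x x)

/-- The distribution parameter `λ(s) = ⟨β'(s) × w(s), w'(s)⟩` of a ruled surface. -/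
def lam3 (β w : ℝ → Fin 3 → ℝ) (s : ℝ) : ℝ :=
  dot3 (cross3 (deriv β s) (w s)) (deriv w s)

/-- `F(s) = ⟨β'(s), w(s)⟩`. -/
def Fcoef (β w : ℝ → Fin 3 → ℝ) (s : ℝ) : ℝ := dot3 (deriv β s) (w s)

/-- `J(s) = ⟨w(s) × w'(s), w''(s)⟩`. -/
def Jcoef (w : ℝ → Fin 3 → ℝ) (s : ℝ) : ℝ :=
  dot3 (cross3 (w s) (deriv w s)) (deriv (deriv w) s)

/- ## Auxiliary lemmas -/

lemma dot3_comm (x y : Fin 3 → ℝ) : dot3 x y = dot3 y x := by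
  simp [dot3]; ring

lemma cross3_self (x : Fin 3 → ℝ) : cross3 x x = 0 := by
  funext i; fin_cases i <;> (simp [cross3]; ring)

lemma dot3_zero_right (x : Fin 3 → ℝ) : dot3 x 0 = 0 := by simp [dot3]

lemma dot3_add_right (x y z : Fin 3 → ℝ) : dot3 x (y + z) = dot3 x y + dot3 x z := by
  simp [dot3]; ring

lemma dot3_smul_add_left (r : ℝ) (x y z : Fin 3 → ℝ) :
    dot3 (r • x + y) z = r * dot3 x z + dot3 y z := by
  simp [dot3]; ring

lemma hasDerivAt_dot3 {f g : ℝ → Fin 3 → ℝ} {f' g' : Fin 3 → ℝ} {s : ℝ}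
    (hf : HasDerivAt f f' s) (hg : HasDerivAt g g' s) :
    HasDerivAt (fun t => dot3 (f t) (g t)) (dot3 f' (g s) + dot3 (f s) g') s := by
  have h0 := ((hasDerivAt_pi.1 hf 0).mul (hasDerivAt_pi.1 hg 0))
  have h1 := ((hasDerivAt_pi.1 hf 1).mul (hasDerivAt_pi.1 hg 1))
  have h2 := ((hasDerivAt_pi.1 hf 2).mul (hasDerivAt_pi.1 hg 2))
  have h := (h0.add h1).add h2
  exact h.congr_deriv (by simp only [dot3]; ring)

lemma hasDerivAt_cross3 {f g : ℝ → Fin 3 → ℝ} {f' g' : Fin 3 → ℝ} {s : ℝ}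
    (hf : HasDerivAt f f' s) (hg : HasDerivAt g g' s) :
    HasDerivAt (fun t => cross3 (f t) (g t)) (cross3 f' (g s) + cross3 (f s) g') s := by
  rw [hasDerivAt_pi]
  intro i
  fin_cases i
  · have h := ((hasDerivAt_pi.1 hf 1).mul (hasDerivAt_pi.1 hg 2)).sub
      ((hasDerivAt_pi.1 hf 2).mul (hasDerivAt_pi.1 hg 1))
    simp only [cross3, Pi.add_apply, Fin.zero_eta, Matrix.cons_val_zero]
    exact h.congr_deriv (by ring)
  · have h := ((hasDerivAt_pi.1 hf 2).mul (hasDerivAt_pi.1 hg 0)).sub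
      ((hasDerivAt_pi.1 hf 0).mul (hasDerivAt_pi.1 hg 2))
    simp only [cross3, Pi.add_apply, Fin.mk_one, Matrix.cons_val_one, Matrix.head_cons]
    exact h.congr_deriv (by simp; ring)
  · have h := ((hasDerivAt_pi.1 hf 0).mul (hasDerivAt_pi.1 hg 1)).sub
      ((hasDerivAt_pi.1 hf 1).mul (hasDerivAt_pi.1 hg 0))
    simp only [cross3, Pi.add_apply, Fin.reduceFinMk, Matrix.cons_val_two, Matrix.tail_cons,
      Matrix.head_cons]
    exact h.congr_deriv (by ring)

lemma hasDerivAt_linmap (A : (Fin 3 → ℝ) →ₗ[ℝ] (Fin 3 → ℝ)) {f : ℝ → Fin 3 → ℝ}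
    {f' : Fin 3 → ℝ} {s : ℝ} (hf : HasDerivAt f f' s) :
    HasDerivAt (fun t => A (f t)) (A f') s := by
  have h := (LinearMap.toContinuousLinearMap A).hasFDerivAt.comp_hasDerivAt s hf
  exact h

/-- completeness of the orthonormal frame `a, b, b × a`. -/
lemma frame_dot (a b x y : Fin 3 → ℝ) (ha : dot3 a a = 1) (hb : dot3 b b = 1)
    (hab : dot3 a b = 0) :
    dot3 x y = dot3 x a * dot3 y a + dot3 x b * dot3 y b
      + dot3 x (cross3 b a) * dot3 y (cross3 b a) := by
  have key1 : dot3 (cross3 x (cross3 b a)) (cross3 y (cross3 b a))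
      = dot3 x y * dot3 (cross3 b a) (cross3 b a) - dot3 x (cross3 b a) * dot3 y (cross3 b a) := by
    simp [dot3, cross3]; ring
  have key2 : dot3 (cross3 x (cross3 b a)) (cross3 y (cross3 b a))
      = dot3 x a * dot3 y a * dot3 b b - dot3 x a * dot3 y b * dot3 a b
        - dot3 x b * dot3 y a * dot3 a b + dot3 x b * dot3 y b * dot3 a a := by
    simp [dot3, cross3]; ring
  have key3 : dot3 (cross3 b a) (cross3 b a) = dot3 a a * dot3 b b - dot3 a b ^ 2 := by
    simp [dot3, cross3]; ring
  rw [ha, hb, hab] at key2 key3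
  rw [key3] at key1
  norm_num at key1 key2
  linarith

lemma convert_aux (Q P S : ℝ) (hS : 0 < S)
    (e1 : (Real.sqrt S)⁻¹ * Q = -P / (2 * S ^ ((3:ℝ)/2))) :
    2 * Q * S = -P := by
  have hs0 : Real.sqrt S ≠ 0 := ne_of_gt (Real.sqrt_pos.2 hS)
  have hpow : S ^ ((3:ℝ)/2) = S * Real.sqrt S := by
    rw [show (3:ℝ)/2 = 1 + 1/2 by norm_num, Real.rpow_add hS, Real.rpow_one,
      Real.sqrt_eq_rpow]
  rw [hpow] at e1
  field_simp at e1
  have h2 : Q * (2*S) * Real.sqrt S = -P * Real.sqrt S := by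
    rw [← e1]; ring
  have := mul_right_cancel₀ hs0 h2
  linarith

lemma coeffs_aux (a b d L p0 p1 p2 : ℝ)
    (h : ∀ u : ℝ, u = 1 ∨ u = 2 ∨ u = 3 ∨ u = 4 ∨ u = 5 →
      2 * (a + b*u + d*u^2) * (L^2 + u^2) = -(p0 + u*p1 + u^2*p2)) :
    d = 0 ∧ b = 0 ∧ p1 = 0 ∧ 2*a + p2 = 0 ∧ 2*a*L^2 + p0 = 0 := by
  have h1 := h 1 (by norm_num); have h2 := h 2 (by norm_num)
  have h3 := h 3 (by norm_num); have h4 := h 4 (by norm_num)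
  have h5 := h 5 (by norm_num)
  ring_nf at h1 h2 h3 h4 h5
  have hd : d = 0 := by linarith
  have hb : b = 0 := by linarith
  have hbL : b * L^2 = 0 := by rw [hb]; ring
  have hdL : d * L^2 = 0 := by rw [hd]; ring
  refine ⟨hd, hb, by linarith, by linarith, by linarith⟩

/-- a self-similar (soliton) solution of the MCF whose initial datum is a
non-cylindrical ruled surface `X(s,u) = β(s) + u·w(s)` parametrized by its line of striction
must be trivial, i.e. its mean curvature vanishes identically:
`λF + λ²J + uλ' + u²J = 0`. -/
theorem noncylindrical_ruled_soliton_is_trivial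
    (I : Set ℝ) (hI : IsOpen I)
    (β w : ℝ → Fin 3 → ℝ)
    (hβ : ContDiffOn ℝ (⊤ : ℕ∞) β I) (hw : ContDiffOn ℝ (⊤ : ℕ∞) w I)
    (hwunit : ∀ s ∈ I, norm3 (w s) = 1)
    (hw'unit : ∀ s ∈ I, norm3 (deriv w s) = 1)
    (hstriction : ∀ s ∈ I, dot3 (deriv β s) (deriv w s) = 0)
    (c : ℝ) (A : (Fin 3 → ℝ) →ₗ[ℝ] (Fin 3 → ℝ))
    (hA : ∀ x y : Fin 3 → ℝ, dot3 (A x) y = - dot3 x (A y))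
    (v : Fin 3 → ℝ)
    (hsol : ∀ s ∈ I, ∀ u : ℝ, lam3 β w s ^ 2 + u ^ 2 > 0 →
      dot3 (c • (β s + u • w s) + A (β s + u • w s) + v)
          ((Real.sqrt (lam3 β w s ^ 2 + u ^ 2))⁻¹ •
            (lam3 β w s • deriv w s + u • cross3 (deriv w s) (w s)))
        = -(lam3 β w s * Fcoef β w s + lam3 β w s ^ 2 * Jcoef w s
              + u * deriv (lam3 β w) s + u ^ 2 * Jcoef w s)
            / (2 * (lam3 β w s ^ 2 + u ^ 2) ^ ((3 : ℝ) / 2))) :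
    ∀ s ∈ I, ∀ u : ℝ,
      lam3 β w s * Fcoef β w s + lam3 β w s ^ 2 * Jcoef w s
        + u * deriv (lam3 β w) s + u ^ 2 * Jcoef w s = 0 := by
  -- unit vector facts
  have hww : ∀ s ∈ I, dot3 (w s) (w s) = 1 := by
    intro s hs
    have h := hwunit s hs
    rw [norm3, Real.sqrt_eq_one] at h
    exact h
  have hww' : ∀ s ∈ I, dot3 (deriv w s) (deriv w s) = 1 := by
    intro s hs
    have h := hw'unit s hs
    rw [norm3, Real.sqrt_eq_one] at h
    exact h
  -- differentiability facts
  have hwD : ∀ s ∈ I, HasDerivAt w (deriv w s) s := fun s hs =>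
    ((hw.differentiableOn (by simp) s hs).differentiableAt (hI.mem_nhds hs)).hasDerivAt
  have hwC1 : ContDiffOn ℝ (⊤ : ℕ∞) (deriv w) I := hw.deriv_of_isOpen hI (by simp)
  have hwD2 : ∀ s ∈ I, HasDerivAt (deriv w) (deriv (deriv w) s) s := fun s hs =>
    ((hwC1.differentiableOn (by simp) s hs).differentiableAt (hI.mem_nhds hs)).hasDerivAt
  have hβD : ∀ s ∈ I, HasDerivAt β (deriv β s) s := fun s hs =>
    ((hβ.differentiableOn (by simp) s hs).differentiableAt (hI.mem_nhds hs)).hasDerivAt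
  have hβC1 : ContDiffOn ℝ (⊤ : ℕ∞) (deriv β) I := hβ.deriv_of_isOpen hI (by simp)
  have hβD2 : ∀ s ∈ I, HasDerivAt (deriv β) (deriv (deriv β) s) s := fun s hs =>
    ((hβC1.differentiableOn (by simp) s hs).differentiableAt (hI.mem_nhds hs)).hasDerivAt
  -- ⟨w', w⟩ = 0
  have hd1 : ∀ s ∈ I, dot3 (deriv w s) (w s) = 0 := by
    intro s hs
    have h1 := hasDerivAt_dot3 (hwD s hs) (hwD s hs)
    have h2 : HasDerivAt (fun t => dot3 (w t) (w t)) 0 s := by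
      have he : (fun t => dot3 (w t) (w t)) =ᶠ[nhds s] fun _ => (1:ℝ) :=
        Filter.eventuallyEq_of_mem (hI.mem_nhds hs) (fun t ht => hww t ht)
      exact (hasDerivAt_const s (1:ℝ)).congr_of_eventuallyEq he
    have h3 := h1.unique h2
    have h4 := dot3_comm (deriv w s) (w s)
    linarith
  -- ⟨w'', w⟩ = -1
  have hd2 : ∀ s ∈ I, dot3 (deriv (deriv w) s) (w s) = -1 := by
    intro s hs
    have h1 := hasDerivAt_dot3 (hwD2 s hs) (hwD s hs)
    have h2 : HasDerivAt (fun t => dot3 (deriv w t) (w t)) 0 s := by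
      have he : (fun t => dot3 (deriv w t) (w t)) =ᶠ[nhds s] fun _ => (0:ℝ) :=
        Filter.eventuallyEq_of_mem (hI.mem_nhds hs) (fun t ht => hd1 t ht)
      exact (hasDerivAt_const s (0:ℝ)).congr_of_eventuallyEq he
    have h3 := h1.unique h2
    have h4 := hww' s hs
    linarith
  -- ⟨w'', w'⟩ = 0
  have hd3 : ∀ s ∈ I, dot3 (deriv (deriv w) s) (deriv w s) = 0 := by
    intro s hs
    have h1 := hasDerivAt_dot3 (hwD2 s hs) (hwD2 s hs)
    have h2 : HasDerivAt (fun t => dot3 (deriv w t) (deriv w t)) 0 s := by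
      have he : (fun t => dot3 (deriv w t) (deriv w t)) =ᶠ[nhds s] fun _ => (1:ℝ) :=
        Filter.eventuallyEq_of_mem (hI.mem_nhds hs) (fun t ht => hww' t ht)
      exact (hasDerivAt_const s (1:ℝ)).congr_of_eventuallyEq he
    have h3 := h1.unique h2
    have h4 := dot3_comm (deriv (deriv w) s) (deriv w s)
    linarith
  -- Step B : coefficient extraction
  have hcoef : ∀ s ∈ I,
      dot3 (A (w s)) (cross3 (deriv w s) (w s)) = 0 ∧
      dot3 (c • β s + A (β s) + v) (cross3 (deriv w s) (w s))
        + lam3 β w s * dot3 (A (w s)) (deriv w s) = 0 ∧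
      deriv (lam3 β w) s = 0 ∧
      2 * (lam3 β w s * dot3 (c • β s + A (β s) + v) (deriv w s)) + Jcoef w s = 0 ∧
      lam3 β w s * Fcoef β w s = 0 := by
    intro s hs
    have hdot : ∀ u r : ℝ,
        dot3 (c • (β s + u • w s) + A (β s + u • w s) + v)
          (r • (lam3 β w s • deriv w s + u • cross3 (deriv w s) (w s)))
        = r * ((lam3 β w s * dot3 (c • β s + A (β s) + v) (deriv w s))
            + (dot3 (c • β s + A (β s) + v) (cross3 (deriv w s) (w s))
                + lam3 β w s * (c * dot3 (w s) (deriv w s)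
                    + dot3 (A (w s)) (deriv w s))) * u
            + (c * dot3 (w s) (cross3 (deriv w s) (w s))
                + dot3 (A (w s)) (cross3 (deriv w s) (w s))) * u^2) := by
      intro u r
      rw [map_add, map_smul]
      simp only [dot3, cross3, Pi.add_apply, Pi.smul_apply, smul_eq_mul,
        Matrix.cons_val_zero, Matrix.cons_val_one, Matrix.head_cons,
        Matrix.cons_val_two, Matrix.tail_cons]
      ring
    have hq := coeffs_aux
      (lam3 β w s * dot3 (c • β s + A (β s) + v) (deriv w s))
      (dot3 (c • β s + A (β s) + v) (cross3 (deriv w s) (w s))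
        + lam3 β w s * (c * dot3 (w s) (deriv w s) + dot3 (A (w s)) (deriv w s)))
      (c * dot3 (w s) (cross3 (deriv w s) (w s))
        + dot3 (A (w s)) (cross3 (deriv w s) (w s)))
      (lam3 β w s)
      (lam3 β w s * Fcoef β w s + lam3 β w s ^ 2 * Jcoef w s)
      (deriv (lam3 β w) s) (Jcoef w s)
      (by
        intro u hu
        have hS : lam3 β w s ^ 2 + u ^ 2 > 0 := by
          rcases hu with rfl|rfl|rfl|rfl|rfl <;> positivity
        have e1 := hsol s hs u hS
        rw [hdot u ((Real.sqrt (lam3 β w s ^ 2 + u ^ 2))⁻¹)] at e1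
        have e2 := convert_aux _ _ _ hS e1
        linear_combination e2)
    obtain ⟨hq1, hq2, hq3, hq4, hq5⟩ := hq
    have hwn : dot3 (w s) (cross3 (deriv w s) (w s)) = 0 := by simp [dot3, cross3]; ring
    have hwdw : dot3 (w s) (deriv w s) = 0 := by
      have := hd1 s hs; have := dot3_comm (w s) (deriv w s); linarith
    constructor
    · rw [hwn] at hq1; linarith
    constructor
    · rw [hwdw] at hq2; linarith [hq2]
    constructor
    · exact hq3
    constructor
    · linarith
    · nlinarith [hq4, hq5]
  -- Step C : J ≡ 0 on I
  have hJ0 : ∀ s ∈ I, Jcoef w s = 0 := by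
    intro s₀ hs₀
    by_contra hJne
    have hL0 : lam3 β w s₀ ≠ 0 := by
      intro h0
      have h4 := (hcoef s₀ hs₀).2.2.2.1
      rw [h0] at h4
      apply hJne; linarith
    -- lam3 is differentiable on I
    have hlamD : ∀ s ∈ I, HasDerivAt (lam3 β w)
        (dot3 (cross3 (deriv (deriv β) s) (w s) + cross3 (deriv β s) (deriv w s)) (deriv w s)
          + dot3 (cross3 (deriv β s) (w s)) (deriv (deriv w) s)) s := by
      intro s hs
      exact hasDerivAt_dot3 (hasDerivAt_cross3 (hβD2 s hs) (hwD s hs)) (hwD2 s hs)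
    have hcont : ContinuousAt (lam3 β w) s₀ := (hlamD s₀ hs₀).continuousAt
    have hev : ∀ᶠ t in nhds s₀, lam3 β w t ≠ 0 ∧ t ∈ I :=
      (hcont.eventually_ne hL0).and (hI.eventually_mem hs₀)
    obtain ⟨ε, hε, hball⟩ := Metric.eventually_nhds_iff_ball.mp hev
    set U := Metric.ball s₀ ε with hUdef
    have hUo : IsOpen U := Metric.isOpen_ball
    have hUI : ∀ t ∈ U, t ∈ I := fun t ht => (hball t ht).2
    have hUl : ∀ t ∈ U, lam3 β w t ≠ 0 := fun t ht => (hball t ht).1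
    have hs₀U : s₀ ∈ U := Metric.mem_ball_self hε
    set μ := lam3 β w s₀ with hμdef
    -- λ is constant on U
    have hconst : ∀ t ∈ U, lam3 β w t = μ := by
      intro t ht
      have hderiv : ∀ x ∈ U, HasDerivWithinAt (lam3 β w) ((fun _ => (0:ℝ)) x) U x := by
        intro x hx
        have h1 := hlamD x (hUI x hx)
        have h2 : deriv (lam3 β w) x = 0 := (hcoef x (hUI x hx)).2.2.1
        have h3 : dot3 (cross3 (deriv (deriv β) x) (w x)
              + cross3 (deriv β x) (deriv w x)) (deriv w x)
            + dot3 (cross3 (deriv β x) (w x)) (deriv (deriv w) x) = 0 := by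
          rw [← h1.deriv]; exact h2
        rw [h3] at h1
        exact h1.hasDerivWithinAt
      have hb := Convex.norm_image_sub_le_of_norm_hasDerivWithin_le (C := 0) hderiv
        (fun x _ => by simp) (convex_ball s₀ ε) hs₀U ht
      have : |lam3 β w t - μ| ≤ 0 := by simpa using hb
      have h0 := abs_nonneg (lam3 β w t - μ)
      have : lam3 β w t - μ = 0 := by
        rw [← abs_eq_zero]; linarith
      linarith
    have hμ0 : μ ≠ 0 := hL0
    -- F ≡ 0 on U
    have hF0 : ∀ t ∈ U, Fcoef β w t = 0 := by
      intro t ht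
      have h5 := (hcoef t (hUI t ht)).2.2.2.2
      rw [hconst t ht] at h5
      exact (mul_eq_zero.mp h5).resolve_left hμ0
    -- main pointwise derivative facts on U
    have main : ∀ s ∈ U,
        (Jcoef w s)^2 = -2*c*μ^2 ∧
        HasDerivAt (fun t => dot3 (c • β t + A (β t) + v) (w t))
          (dot3 (c • β s + A (β s) + v) (deriv w s)) s ∧
        HasDerivAt (Jcoef w) (2*μ*dot3 (c • β s + A (β s) + v) (w s)) s ∧
        2 * (μ * dot3 (c • β s + A (β s) + v) (deriv w s)) + Jcoef w s = 0 := by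
      intro s hsU
      have hsI := hUI s hsU
      -- frame facts at s
      have F1 : dot3 (w s) (w s) = 1 := hww s hsI
      have F2 : dot3 (deriv w s) (deriv w s) = 1 := hww' s hsI
      have F3 : dot3 (deriv w s) (w s) = 0 := hd1 s hsI
      have hab : dot3 (w s) (deriv w s) = 0 := by
        rw [dot3_comm]; exact F3
      have F4 : dot3 (deriv (deriv w) s) (w s) = -1 := hd2 s hsI
      have F5 : dot3 (deriv (deriv w) s) (deriv w s) = 0 := hd3 s hsI
      have F6 : dot3 (deriv β s) (deriv w s) = 0 := hstriction s hsI
      have F7 : dot3 (deriv β s) (w s) = 0 := hF0 s hsU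
      have F8 : dot3 (deriv β s) (cross3 (deriv w s) (w s)) = -μ := by
        have hid : dot3 (deriv β s) (cross3 (deriv w s) (w s))
            = -dot3 (cross3 (deriv β s) (w s)) (deriv w s) := by
          simp [dot3, cross3]; ring
        rw [hid, show dot3 (cross3 (deriv β s) (w s)) (deriv w s) = lam3 β w s from rfl,
          hconst s hsU]
      have F9 : dot3 (A (w s)) (cross3 (deriv w s) (w s)) = 0 := (hcoef s hsI).1
      have F10 : dot3 (c • β s + A (β s) + v) (cross3 (deriv w s) (w s))
          + μ * dot3 (A (w s)) (deriv w s) = 0 := by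
        have := (hcoef s hsI).2.1
        rw [hconst s hsU] at this
        exact this
      have F11 : 2 * (μ * dot3 (c • β s + A (β s) + v) (deriv w s)) + Jcoef w s = 0 := by
        have := (hcoef s hsI).2.2.2.1
        rw [hconst s hsU] at this
        exact this
      -- skew-symmetry facts
      have hAxx : ∀ x : Fin 3 → ℝ, dot3 (A x) x = 0 := by
        intro x
        have h1 := hA x x
        have h2 := dot3_comm x (A x)
        linarith
      -- ⟨w'', n⟩ = -J
      have hJn : dot3 (deriv (deriv w) s) (cross3 (deriv w s) (w s)) = -Jcoef w s := by
        simp [Jcoef, dot3, cross3]; ring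
      -- frame expansion lemmas
      have TT : ∀ x : Fin 3 → ℝ, dot3 x (cross3 (deriv (deriv w) s) (w s))
          = Jcoef w s * dot3 x (deriv w s) := by
        intro x
        have h1 : dot3 x (cross3 (deriv (deriv w) s) (w s))
            = dot3 (deriv (deriv w) s) (cross3 (w s) x) := by
          simp [dot3, cross3]; ring
        rw [h1, frame_dot (w s) (deriv w s) (deriv (deriv w) s) (cross3 (w s) x) F1 F2 hab]
        have h2 : dot3 (cross3 (w s) x) (w s) = 0 := by simp [dot3, cross3]; ring
        have h4 : dot3 (cross3 (w s) x) (cross3 (deriv w s) (w s))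
            = dot3 (w s) (deriv w s) * dot3 x (w s) - dot3 (w s) (w s) * dot3 x (deriv w s) := by
          simp [dot3, cross3]; ring
        rw [h2, h4, F1, F4, F5, hab, hJn]
        ring
      have I3 : ∀ x : Fin 3 → ℝ, dot3 x (deriv (deriv w) s)
          = -dot3 x (w s) - Jcoef w s * dot3 x (cross3 (deriv w s) (w s)) := by
        intro x
        rw [frame_dot (w s) (deriv w s) x (deriv (deriv w) s) F1 F2 hab, F4, F5, hJn]
        ring
      have I4 : ∀ x : Fin 3 → ℝ, dot3 (deriv β s) x
          = -μ * dot3 x (cross3 (deriv w s) (w s)) := by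
        intro x
        rw [frame_dot (w s) (deriv w s) (deriv β s) x F1 F2 hab, F6, F7, F8]
        ring
      -- derivative facts at s
      have Hw := hwD s hsI
      have HDw := hwD2 s hsI
      have Hβ := hβD s hsI
      have HG : HasDerivAt (fun t => c • β t + A (β t) + v)
          (c • deriv β s + A (deriv β s)) s :=
        ((Hβ.const_smul c).add (hasDerivAt_linmap A Hβ)).add_const v
      have HAw : HasDerivAt (fun t => A (w t)) (A (deriv w s)) s := hasDerivAt_linmap A Hw
      have Hn : HasDerivAt (fun t => cross3 (deriv w t) (w t))
          (cross3 (deriv (deriv w) s) (w s) + cross3 (deriv w s) (deriv w s)) s :=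
        hasDerivAt_cross3 HDw Hw
      -- ⟨A w', n⟩ = -J α
      have HA1 : dot3 (A (deriv w s)) (cross3 (deriv w s) (w s))
          = -(Jcoef w s * dot3 (A (w s)) (deriv w s)) := by
        have h1 := hasDerivAt_dot3 HAw Hn
        have h2 : HasDerivAt (fun t => dot3 (A (w t)) (cross3 (deriv w t) (w t))) 0 s := by
          have he : (fun t => dot3 (A (w t)) (cross3 (deriv w t) (w t)))
              =ᶠ[nhds s] fun _ => (0:ℝ) :=
            Filter.eventuallyEq_of_mem (hI.mem_nhds hsI) (fun t ht => (hcoef t ht).1)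
          exact (hasDerivAt_const s (0:ℝ)).congr_of_eventuallyEq he
        have h3 := h1.unique h2
        rw [dot3_add_right, cross3_self, dot3_zero_right, TT (A (w s))] at h3
        linarith
      -- derivative of g0 = ⟨G, w⟩ has value g1 = ⟨G, w'⟩
      have Hg0 : HasDerivAt (fun t => dot3 (c • β t + A (β t) + v) (w t))
          (dot3 (c • β s + A (β s) + v) (deriv w s)) s := by
        have h1 := hasDerivAt_dot3 HG Hw
        have h2 : dot3 (c • deriv β s + A (deriv β s)) (w s) = 0 := by
          rw [dot3_smul_add_left, F7]
          have h3 : dot3 (A (deriv β s)) (w s) = -dot3 (deriv β s) (A (w s)) := hA _ _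
          rw [h3, I4 (A (w s))]
          have h4 : dot3 (A (w s)) (cross3 (deriv w s) (w s)) = 0 := F9
          rw [h4]; ring
        rw [h2] at h1
        simpa using h1
      -- derivative of g1 = ⟨G, w'⟩ has value -g0
      have Hg1 : HasDerivAt (fun t => dot3 (c • β t + A (β t) + v) (deriv w t))
          (-dot3 (c • β s + A (β s) + v) (w s)) s := by
        have h1 := hasDerivAt_dot3 HG HDw
        have h2 : dot3 (c • deriv β s + A (deriv β s)) (deriv w s)
            = -(μ * (Jcoef w s * dot3 (A (w s)) (deriv w s))) := by
          rw [dot3_smul_add_left, F6]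
          have h3 : dot3 (A (deriv β s)) (deriv w s) = -dot3 (deriv β s) (A (deriv w s)) :=
            hA _ _
          rw [h3, I4 (A (deriv w s))]
          have h4 : dot3 (A (deriv w s)) (cross3 (deriv w s) (w s))
              = -(Jcoef w s * dot3 (A (w s)) (deriv w s)) := HA1
          rw [h4]; ring
        have h5 : dot3 (c • β s + A (β s) + v) (deriv (deriv w) s)
            = -dot3 (c • β s + A (β s) + v) (w s)
              + μ * (Jcoef w s * dot3 (A (w s)) (deriv w s)) := by
          rw [I3]
          have h6 : dot3 (c • β s + A (β s) + v) (cross3 (deriv w s) (w s))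
              = -(μ * dot3 (A (w s)) (deriv w s)) := by linarith
          rw [h6]; ring
        rw [h2, h5] at h1
        have h7 : -(μ * (Jcoef w s * dot3 (A (w s)) (deriv w s)))
            + (-dot3 (c • β s + A (β s) + v) (w s)
              + μ * (Jcoef w s * dot3 (A (w s)) (deriv w s)))
            = -dot3 (c • β s + A (β s) + v) (w s) := by ring
        rw [h7] at h1
        exact h1
      -- J² = -2cμ² : derivative of ⟨G, n⟩ = -μα
      have hJsq : (Jcoef w s)^2 = -2*c*μ^2 := by
        have h1 := hasDerivAt_dot3 HG Hn
        have hα := hasDerivAt_dot3 HAw HDw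
        have h2 : HasDerivAt (fun t => -μ * dot3 (A (w t)) (deriv w t))
            (-μ * (dot3 (A (deriv w s)) (deriv w s) + dot3 (A (w s)) (deriv (deriv w) s))) s :=
          hα.const_mul (-μ)
        have he : (fun t => dot3 (c • β t + A (β t) + v) (cross3 (deriv w t) (w t)))
            =ᶠ[nhds s] (fun t => -μ * dot3 (A (w t)) (deriv w t)) := by
          apply Filter.eventuallyEq_of_mem (hUo.mem_nhds hsU)
          intro t ht
          have ha := (hcoef t (hUI t ht)).2.1
          rw [hconst t ht] at ha
          simp only []
          linarith
        have h3 : HasDerivAt (fun t => dot3 (c • β t + A (β t) + v) (cross3 (deriv w t) (w t)))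
            (-μ * (dot3 (A (deriv w s)) (deriv w s) + dot3 (A (w s)) (deriv (deriv w) s))) s :=
          h2.congr_of_eventuallyEq he
        have h4 := h1.unique h3
        -- simplify both sides of h4
        have e1 : dot3 (c • deriv β s + A (deriv β s)) (cross3 (deriv w s) (w s))
            = -(c*μ) := by
          rw [dot3_smul_add_left, F8]
          have h5 : dot3 (A (deriv β s)) (cross3 (deriv w s) (w s))
              = -dot3 (deriv β s) (A (cross3 (deriv w s) (w s))) := hA _ _
          rw [h5, I4 (A (cross3 (deriv w s) (w s))), hAxx (cross3 (deriv w s) (w s))]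
          ring
        have e2 : dot3 (c • β s + A (β s) + v)
            (cross3 (deriv (deriv w) s) (w s) + cross3 (deriv w s) (deriv w s))
            = Jcoef w s * dot3 (c • β s + A (β s) + v) (deriv w s) := by
          rw [dot3_add_right, cross3_self, dot3_zero_right, TT]; ring
        have e3 : dot3 (A (deriv w s)) (deriv w s) = 0 := hAxx _
        have e4 : dot3 (A (w s)) (deriv (deriv w) s) = 0 := by
          rw [I3 (A (w s)), hAxx, F9]; ring
        rw [e1, e2, e3, e4] at h4
        -- h4 : -(cμ) + J*g1 = -μ*(0+0)
        linear_combination Jcoef w s * F11 + (-2*μ) * h4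
      refine ⟨hJsq, Hg0, ?_, F11⟩
      -- J(t) = -2μ⟨G,w'⟩(t) on U, so J has derivative 2μ⟨G,w⟩
      have hJd : HasDerivAt (fun t => (-2*μ) * dot3 (c • β t + A (β t) + v) (deriv w t))
          ((-2*μ) * -dot3 (c • β s + A (β s) + v) (w s)) s := Hg1.const_mul (-2*μ)
      have he : (Jcoef w) =ᶠ[nhds s]
          (fun t => (-2*μ) * dot3 (c • β t + A (β t) + v) (deriv w t)) := by
        apply Filter.eventuallyEq_of_mem (hUo.mem_nhds hsU)
        intro t ht
        have ha := (hcoef t (hUI t ht)).2.2.2.1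
        rw [hconst t ht] at ha
        simp only []
        linarith
      have h5 : HasDerivAt (Jcoef w) ((-2*μ) * -dot3 (c • β s + A (β s) + v) (w s)) s :=
        hJd.congr_of_eventuallyEq he
      have h6 : (-2*μ) * -dot3 (c • β s + A (β s) + v) (w s)
          = 2*μ*dot3 (c • β s + A (β s) + v) (w s) := by ring
      rw [h6] at h5
      exact h5
    -- conclude: J never vanishes on U, hence ⟨G,w⟩ ≡ 0 on U
    have hJsq0 : (Jcoef w s₀)^2 = -2*c*μ^2 := (main s₀ hs₀U).1
    have hJne' : ∀ t ∈ U, Jcoef w t ≠ 0 := by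
      intro t ht h0
      have h1 := (main t ht).1
      rw [h0] at h1
      apply hJne
      have : (Jcoef w s₀)^2 = 0 := by rw [hJsq0, ← h1]; ring
      exact pow_eq_zero_iff (by norm_num) |>.mp this
    have hg0zero : ∀ t ∈ U, dot3 (c • β t + A (β t) + v) (w t) = 0 := by
      intro t ht
      have hJd := (main t ht).2.2.1
      have hsq : HasDerivAt (fun x => Jcoef w x ^ 2)
          (2 * Jcoef w t * (2*μ*dot3 (c • β t + A (β t) + v) (w t))) t := by
        have := hJd.pow 2
        exact this.congr_deriv (by simp only [Nat.cast_ofNat, Nat.reduceSub, pow_one])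
      have hconstsq : HasDerivAt (fun x => Jcoef w x ^ 2) 0 t := by
        have he : (fun x => Jcoef w x ^ 2) =ᶠ[nhds t] fun _ => (-2*c*μ^2) :=
          Filter.eventuallyEq_of_mem (hUo.mem_nhds ht) (fun x hx => (main x hx).1)
        exact (hasDerivAt_const t (-2*c*μ^2)).congr_of_eventuallyEq he
      have h1 := hsq.unique hconstsq
      have h2 : (4*μ*Jcoef w t) * dot3 (c • β t + A (β t) + v) (w t) = 0 := by
        linarith [h1]
      have h3 : (4:ℝ)*μ*Jcoef w t ≠ 0 := by
        apply mul_ne_zero (mul_ne_zero (by norm_num) hμ0) (hJne' t ht)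
      exact (mul_eq_zero.mp h2).resolve_left h3
    -- ⟨G,w⟩ ≡ 0 on U but its derivative at s₀ is ⟨G,w'⟩(s₀) = -J(s₀)/(2μ) ≠ 0
    have Hg0 := (main s₀ hs₀U).2.1
    have Hg0' : HasDerivAt (fun t => dot3 (c • β t + A (β t) + v) (w t)) 0 s₀ := by
      have he : (fun t => dot3 (c • β t + A (β t) + v) (w t)) =ᶠ[nhds s₀] fun _ => (0:ℝ) :=
        Filter.eventuallyEq_of_mem (hUo.mem_nhds hs₀U) (fun t ht => hg0zero t ht)
      exact (hasDerivAt_const s₀ (0:ℝ)).congr_of_eventuallyEq he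
    have h1 := Hg0.unique Hg0'
    have h2 := (main s₀ hs₀U).2.2.2
    rw [h1] at h2
    apply hJne
    linarith
  -- final conclusion
  intro s hs u
  have h := hcoef s hs
  rw [hJ0 s hs, h.2.2.1]
  have h5 := h.2.2.2.2
  linear_combination h5
end
end

section
/- Let X(s,u)=P+u·w(s) be a conical surface, with P∈ℝ³ and w:I→ℝ³ smooth with ‖w(s)‖=1 and w'(s)≠0 for all s∈I. Suppose there exist c∈ℝ, a skew-symmetric linear map A:ℝ³→ℝ³ and v∈ℝ³ such that ⟨c·X(s,u)+A(X(s,u))+v, N(s)⟩ = H(s,u) for all s∈I and all u>0. Then ⟨w''(s), w'(s)×w(s)⟩=0 for all s∈I; in particular H≡0 and X is a trivial (minimal) solution. -/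
noncomputable section

lemma norm3_ne_zero {x : Fin 3 → ℝ} (hx : x ≠ 0) : norm3 x ≠ 0 := by
  intro h
  apply hx
  have hnn : 0 ≤ dot3 x x := by unfold dot3; nlinarith [sq_nonneg (x 0), sq_nonneg (x 1), sq_nonneg (x 2)]
  have hle : dot3 x x ≤ 0 := Real.sqrt_eq_zero'.mp h
  have hd : dot3 x x = 0 := le_antisymm hle hnn
  unfold dot3 at hd
  have h0 : x 0 = 0 := by nlinarith [sq_nonneg (x 0), sq_nonneg (x 1), sq_nonneg (x 2)]
  have h1 : x 1 = 0 := by nlinarith [sq_nonneg (x 0), sq_nonneg (x 1), sq_nonneg (x 2)]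
  have h2 : x 2 = 0 := by nlinarith [sq_nonneg (x 0), sq_nonneg (x 1), sq_nonneg (x 2)]
  funext i; fin_cases i <;> simp [h0, h1, h2]

/-- a self-similar (soliton) solution of the MCF whose initial datum is a
conical surface `X(s,u) = P + u·w(s)` must be trivial: `⟨w''(s), w'(s) × w(s)⟩ = 0`,
i.e. the mean curvature vanishes identically. -/
theorem conical_soliton_is_trivial
    (I : Set ℝ) (hI : IsOpen I)
    (P : Fin 3 → ℝ) (w : ℝ → Fin 3 → ℝ)
    (hw : ContDiffOn ℝ (⊤ : ℕ∞) w I)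
    (hwunit : ∀ s ∈ I, norm3 (w s) = 1)
    (hw' : ∀ s ∈ I, deriv w s ≠ 0)
    (c : ℝ) (A : (Fin 3 → ℝ) →ₗ[ℝ] (Fin 3 → ℝ))
    (hA : ∀ x y : Fin 3 → ℝ, dot3 (A x) y = - dot3 x (A y))
    (v : Fin 3 → ℝ)
    (hsol : ∀ s ∈ I, ∀ u : ℝ, 0 < u →
      dot3 (c • (P + u • w s) + A (P + u • w s) + v)
          ((norm3 (deriv w s))⁻¹ • cross3 (deriv w s) (w s))
        = dot3 (deriv (deriv w) s) (cross3 (deriv w s) (w s))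
            / (2 * u * norm3 (deriv w s) ^ 3)) :
    ∀ s ∈ I, dot3 (deriv (deriv w) s) (cross3 (deriv w s) (w s)) = 0 := by
  intro s hs
  set n : ℝ := norm3 (deriv w s) with hn_def
  have hn : n ≠ 0 := norm3_ne_zero (hw' s hs)
  set N : Fin 3 → ℝ := cross3 (deriv w s) (w s) with hN_def
  set K : ℝ := dot3 (deriv (deriv w) s) N with hK_def
  -- the left-hand side is affine in u
  have key : ∀ u : ℝ,
      dot3 (c • (P + u • w s) + A (P + u • w s) + v) (n⁻¹ • N)
        = dot3 (c • P + A P + v) (n⁻¹ • N)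
          + u * dot3 (c • w s + A (w s)) (n⁻¹ • N) := by
    intro u
    have hA' : A (P + u • w s) = A P + u • A (w s) := by
      rw [map_add, map_smul]
    rw [hA']
    simp only [dot3, Pi.add_apply, Pi.smul_apply, smul_eq_mul]
    ring
  have h1 := hsol s hs 1 one_pos
  have h2 := hsol s hs 2 two_pos
  have h3 := hsol s hs 3 three_pos
  rw [key] at h1 h2 h3
  set a := dot3 (c • P + A P + v) (n⁻¹ • N)
  set b := dot3 (c • w s + A (w s)) (n⁻¹ • N)
  show K = 0
  have hn3 : (2 : ℝ) * n ^ 3 ≠ 0 := by positivity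
  field_simp at h1 h2 h3
  have hX : dot3 (deriv (deriv w) s) (cross3 (deriv w s) (w s)) / norm3 (deriv w s) ^ 3 = 0 := by linarith
  rw [div_eq_zero_iff] at hX
  exact hX.resolve_right (pow_ne_zero 3 hn)
end
end

section
/- Let X(s,u)=(φ(s)cos u, φ(s)sin u, ψ(s)) be a surface of revolution with φ(s)>0 and φ'(s)²+ψ'(s)²>0 for all s∈I, and let a,b,c∈ℝ. Then the soliton equation ⟨c·X(s,u)+a·R(X(s,u))+b·e₃, N(s,u)⟩ = H(s,u) holds for all (s,u)∈I×ℝ if and only if for all s∈I: φ(φ''ψ'−φ'ψ'') − ψ'(φ'²+ψ'²) = 2φ(φ'²+ψ'²)·(c(ψ'φ−ψφ') − bφ'). (Equivalently, the curvature κ=(φ''ψ'−φ'ψ'')/(φ'²+ψ'²)^{3/2} of the generating curve α(s)=(0,φ(s),ψ(s)) satisfies κ=(1/‖τ‖)(2c⟨α,η⟩+2b⟨e₃,η⟩+⟨e₃,τ⟩/φ), where τ=α' and η=(0,ψ',−φ').) -/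
noncomputable section

/-- characterization of self-similar solutions of the MCF by surfaces of
revolution `X(s,u) = (φ(s)cos u, φ(s)sin u, ψ(s))` under a homothetic helicoidal motion
about the z-axis with velocity field `P ↦ c·P + a·R(P) + b·e₃`, `R(x,y,z) = (−y,x,0)`. -/
theorem revolution_soliton_iff
    (I : Set ℝ) (hI : IsOpen I)
    (φ ψ : ℝ → ℝ)
    (hφ : ContDiffOn ℝ (⊤ : ℕ∞) φ I) (hψ : ContDiffOn ℝ (⊤ : ℕ∞) ψ I)
    (hφpos : ∀ s ∈ I, 0 < φ s)
    (hreg : ∀ s ∈ I, 0 < deriv φ s ^ 2 + deriv ψ s ^ 2)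
    (a b c : ℝ) :
    (∀ s ∈ I, ∀ u : ℝ,
        dot3 (c • (![φ s * Real.cos u, φ s * Real.sin u, ψ s] : Fin 3 → ℝ)
              + a • (![-(φ s * Real.sin u), φ s * Real.cos u, 0] : Fin 3 → ℝ)
              + b • (![0, 0, 1] : Fin 3 → ℝ))
            ((Real.sqrt (deriv φ s ^ 2 + deriv ψ s ^ 2))⁻¹ •
              (![deriv ψ s * Real.cos u, deriv ψ s * Real.sin u, -(deriv φ s)] : Fin 3 → ℝ))
          = (φ s * (deriv (deriv φ) s * deriv ψ s - deriv φ s * deriv (deriv ψ) s)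
                - deriv ψ s * (deriv φ s ^ 2 + deriv ψ s ^ 2))
              / (2 * φ s * (deriv φ s ^ 2 + deriv ψ s ^ 2) ^ ((3 : ℝ) / 2)))
      ↔ (∀ s ∈ I,
          φ s * (deriv (deriv φ) s * deriv ψ s - deriv φ s * deriv (deriv ψ) s)
              - deriv ψ s * (deriv φ s ^ 2 + deriv ψ s ^ 2)
            = 2 * φ s * (deriv φ s ^ 2 + deriv ψ s ^ 2)
                * (c * (deriv ψ s * φ s - ψ s * deriv φ s) - b * deriv φ s)) := by
  have key : ∀ s ∈ I, ∀ u : ℝ,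
      (dot3 (c • (![φ s * Real.cos u, φ s * Real.sin u, ψ s] : Fin 3 → ℝ)
              + a • (![-(φ s * Real.sin u), φ s * Real.cos u, 0] : Fin 3 → ℝ)
              + b • (![0, 0, 1] : Fin 3 → ℝ))
            ((Real.sqrt (deriv φ s ^ 2 + deriv ψ s ^ 2))⁻¹ •
              (![deriv ψ s * Real.cos u, deriv ψ s * Real.sin u, -(deriv φ s)] : Fin 3 → ℝ))
          = (φ s * (deriv (deriv φ) s * deriv ψ s - deriv φ s * deriv (deriv ψ) s)
                - deriv ψ s * (deriv φ s ^ 2 + deriv ψ s ^ 2))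
              / (2 * φ s * (deriv φ s ^ 2 + deriv ψ s ^ 2) ^ ((3 : ℝ) / 2)))
      ↔ (φ s * (deriv (deriv φ) s * deriv ψ s - deriv φ s * deriv (deriv ψ) s)
              - deriv ψ s * (deriv φ s ^ 2 + deriv ψ s ^ 2)
            = 2 * φ s * (deriv φ s ^ 2 + deriv ψ s ^ 2)
                * (c * (deriv ψ s * φ s - ψ s * deriv φ s) - b * deriv φ s)) := by
    intro s hs u
    have hw : 0 < deriv φ s ^ 2 + deriv ψ s ^ 2 := hreg s hs
    have hφs : 0 < φ s := hφpos s hs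
    set w : ℝ := deriv φ s ^ 2 + deriv ψ s ^ 2 with hwdef
    clear_value w
    have hsw : 0 < Real.sqrt w := Real.sqrt_pos.mpr hw
    have h32 : w ^ ((3 : ℝ) / 2) = w * Real.sqrt w := by
      rw [show ((3 : ℝ) / 2) = 1 + 1 / 2 by norm_num, Real.rpow_add hw, Real.rpow_one,
        ← Real.sqrt_eq_rpow]
    have hsc : Real.sin u ^ 2 + Real.cos u ^ 2 = 1 := Real.sin_sq_add_cos_sq u
    have hd : dot3 (c • (![φ s * Real.cos u, φ s * Real.sin u, ψ s] : Fin 3 → ℝ)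
              + a • (![-(φ s * Real.sin u), φ s * Real.cos u, 0] : Fin 3 → ℝ)
              + b • (![0, 0, 1] : Fin 3 → ℝ))
            ((Real.sqrt w)⁻¹ •
              (![deriv ψ s * Real.cos u, deriv ψ s * Real.sin u, -(deriv φ s)] : Fin 3 → ℝ))
        = (c * (deriv ψ s * φ s - ψ s * deriv φ s) - b * deriv φ s) / Real.sqrt w := by
      simp only [dot3, Pi.add_apply, Pi.smul_apply, smul_eq_mul,
        Matrix.cons_val_zero, Matrix.cons_val_one, Matrix.head_cons,
        Matrix.cons_val_two, Matrix.tail_cons]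
      field_simp
      linear_combination (c * φ s * deriv ψ s) * hsc
    rw [hd, h32, div_eq_div_iff hsw.ne' (by positivity)]
    constructor
    · intro h
      apply mul_right_cancel₀ hsw.ne'
      linear_combination -h
    · intro h
      linear_combination (-Real.sqrt w) * h
  constructor
  · intro h s hs
    exact (key s hs 0).mp (h s hs 0)
  · intro h s hs u
    exact (key s hs u).mpr (h s hs)
end
end

section
/- Let X(s,u)=β(s)+u·w be a cylindrical ruled surface with β(s)=(0,h(s),q(s)) a plane curve and w=(x₀,y₀,z₀) a constant unit vector, where h,q:I→ℝ are smooth and h'(s)²+q'(s)²−(y₀h'(s)+z₀q'(s))²>0 for all s∈I, and let a,b,c∈ℝ. Then the soliton equation ⟨c·X(s,u)+a·R(X(s,u))+b·e₁, N(s)⟩ = H(s) holds for all (s,u)∈I×ℝ if and only if for all s∈I both: (i) a·x₀·(z₀q'(s)+y₀h'(s))=0, and (ii) 2c·x₀(h q'−q h') + 2b(z₀h'−y₀q') − 2a·x₀(q q'+h h') = x₀(q'h''−q''h')/((h')²+(q')²−(y₀h'+z₀q')²). -/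
noncomputable section

/-- characterization of self-similar solutions of the MCF by cylindrical
ruled surfaces `X(s,u) = β(s) + u·w`, `β(s) = (0, h(s), q(s))`, `w = (x₀,y₀,z₀)` a unit
vector, under a homothetic helicoidal motion about the x-axis with velocity field
`P ↦ c·P + a·R(P) + b·e₁`, `R(x,y,z) = (0,−z,y)`. -/
theorem cylindrical_soliton_iff_itemI
    (I : Set ℝ) (hI : IsOpen I)
    (h q : ℝ → ℝ) (hh : ContDiffOn ℝ (⊤ : ℕ∞) h I) (hq : ContDiffOn ℝ (⊤ : ℕ∞) q I)
    (x₀ y₀ z₀ : ℝ)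
    (β : ℝ → Fin 3 → ℝ) (hβdef : ∀ s, β s = ![0, h s, q s])
    (w : Fin 3 → ℝ) (hwdef : w = ![x₀, y₀, z₀]) (hwunit : norm3 w = 1)
    (hreg : ∀ s ∈ I,
      0 < deriv h s ^ 2 + deriv q s ^ 2 - (y₀ * deriv h s + z₀ * deriv q s) ^ 2)
    (a b c : ℝ) :
    (∀ s ∈ I, ∀ u : ℝ,
        dot3 (c • (β s + u • w)
              + a • (![0, -((β s + u • w) 2), (β s + u • w) 1] : Fin 3 → ℝ)
              + b • (![1, 0, 0] : Fin 3 → ℝ))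
            ((norm3 (cross3 (deriv β s) w))⁻¹ • cross3 (deriv β s) w)
          = dot3 (deriv (deriv β) s) (cross3 (deriv β s) w)
              / (2 * (norm3 (deriv β s) ^ 2 - dot3 (deriv β s) w ^ 2) ^ ((3 : ℝ) / 2)))
      ↔ (∀ s ∈ I,
          a * x₀ * (z₀ * deriv q s + y₀ * deriv h s) = 0 ∧
          2 * c * x₀ * (h s * deriv q s - q s * deriv h s)
              + 2 * b * (z₀ * deriv h s - y₀ * deriv q s)
              - 2 * a * x₀ * (q s * deriv q s + h s * deriv h s)
            = x₀ * (deriv q s * deriv (deriv h) s - deriv (deriv q) s * deriv h s)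
                / (deriv h s ^ 2 + deriv q s ^ 2
                    - (y₀ * deriv h s + z₀ * deriv q s) ^ 2)) := by
  have hβfun : β = fun t => ![0, h t, q t] := funext hβdef
  have hw2 : x₀ ^ 2 + y₀ ^ 2 + z₀ ^ 2 = 1 := by
    have hnn : (0:ℝ) ≤ dot3 w w := by simp [dot3, hwdef]; nlinarith [sq_nonneg x₀, sq_nonneg y₀, sq_nonneg z₀]
    have h1 : dot3 w w = 1 := by
      have := Real.sq_sqrt hnn
      rw [norm3] at hwunit
      nlinarith [hwunit]
    simp [dot3, hwdef] at h1
    nlinarith [h1]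
  have hhd : ∀ t ∈ I, HasDerivAt h (deriv h t) t := fun t ht =>
    ((hh.contDiffAt (hI.mem_nhds ht)).differentiableAt (by simp)).hasDerivAt
  have hqd : ∀ t ∈ I, HasDerivAt q (deriv q t) t := fun t ht =>
    ((hq.contDiffAt (hI.mem_nhds ht)).differentiableAt (by simp)).hasDerivAt
  have hhC : ContDiffOn ℝ (⊤ : ℕ∞) (deriv h) I := hh.deriv_of_isOpen hI (by simp)
  have hqC : ContDiffOn ℝ (⊤ : ℕ∞) (deriv q) I := hq.deriv_of_isOpen hI (by simp)
  have hhd2 : ∀ t ∈ I, HasDerivAt (deriv h) (deriv (deriv h) t) t := fun t ht =>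
    ((hhC.contDiffAt (hI.mem_nhds ht)).differentiableAt (by simp)).hasDerivAt
  have hqd2 : ∀ t ∈ I, HasDerivAt (deriv q) (deriv (deriv q) t) t := fun t ht =>
    ((hqC.contDiffAt (hI.mem_nhds ht)).differentiableAt (by simp)).hasDerivAt
  have hβd : ∀ t ∈ I, HasDerivAt β (![0, deriv h t, deriv q t]) t := by
    intro t ht
    rw [hβfun, hasDerivAt_pi]
    intro i
    fin_cases i
    · simpa using hasDerivAt_const t (0:ℝ)
    · simpa using hhd t ht
    · simpa using hqd t ht
  have hβ' : ∀ t ∈ I, deriv β t = ![0, deriv h t, deriv q t] := fun t ht => (hβd t ht).deriv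
  have hβ'' : ∀ s ∈ I, deriv (deriv β) s = ![0, deriv (deriv h) s, deriv (deriv q) s] := by
    intro s hs
    have hev : deriv β =ᶠ[nhds s] fun t => ![0, deriv h t, deriv q t] :=
      Filter.eventuallyEq_of_mem (hI.mem_nhds hs) (fun t ht => hβ' t ht)
    rw [hev.deriv_eq]
    have hg : HasDerivAt (fun t => (![0, deriv h t, deriv q t] : Fin 3 → ℝ))
        (![0, deriv (deriv h) s, deriv (deriv q) s]) s := by
      rw [hasDerivAt_pi]
      intro i
      fin_cases i
      · simpa using hasDerivAt_const s (0:ℝ)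
      · simpa using hhd2 s hs
      · simpa using hqd2 s hs
    exact hg.deriv
  refine forall₂_congr fun s hs => ?_
  rw [hβ' s hs, hβ'' s hs, hβdef s, hwdef]
  have hD := hreg s hs
  set h' := deriv h s with hh'
  set q' := deriv q s with hq'
  set h'' := deriv (deriv h) s with hh''
  set q'' := deriv (deriv q) s with hq''
  set H := h s with hH
  set Q := q s with hQ
  set D := h' ^ 2 + q' ^ 2 - (y₀ * h' + z₀ * q') ^ 2 with hDdef
  have ecross : cross3 ![0, h', q'] ![x₀, y₀, z₀] = ![h' * z₀ - q' * y₀, q' * x₀, -(h' * x₀)] := by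
    funext i; fin_cases i <;> simp [cross3]
  have enorm1 : norm3 ![0, h', q'] ^ 2 = h' ^ 2 + q' ^ 2 := by
    rw [norm3, Real.sq_sqrt (by simp [dot3]; nlinarith [sq_nonneg h', sq_nonneg q'])]
    simp [dot3]; ring
  have edot : dot3 ![0, h', q'] ![x₀, y₀, z₀] = y₀ * h' + z₀ * q' := by simp [dot3]; ring
  have enorm2 : norm3 ![h' * z₀ - q' * y₀, q' * x₀, -(h' * x₀)] = Real.sqrt D := by
    rw [norm3]; congr 1
    simp only [dot3, Matrix.cons_val_zero, Matrix.cons_val_one, Matrix.head_cons,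
      Matrix.cons_val_two, Matrix.tail_cons, hDdef]
    linear_combination (h' ^ 2 + q' ^ 2) * hw2
  have erpow : (h' ^ 2 + q' ^ 2 - (y₀ * h' + z₀ * q') ^ 2) ^ ((3:ℝ)/2) = D * Real.sqrt D := by
    rw [show (3:ℝ)/2 = 1 + 1/2 by norm_num, Real.rpow_add hD, Real.rpow_one,
      Real.sqrt_eq_rpow]
  simp only [ecross, enorm1, edot, enorm2, erpow]
  simp only [dot3, Pi.add_apply, Pi.smul_apply, smul_eq_mul, Matrix.cons_val_zero,
    Matrix.cons_val_one, Matrix.head_cons, Matrix.cons_val_two, Matrix.tail_cons]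
  have hr : (0:ℝ) < Real.sqrt D := Real.sqrt_pos.2 hD
  have hrne : Real.sqrt D ≠ 0 := ne_of_gt hr
  have hDne : D ≠ 0 := ne_of_gt hD
  have hne : 2 * (D * Real.sqrt D) ≠ 0 := by positivity
  have hexp : ∀ u : ℝ,
      ((c * (0 + u * x₀) + a * 0 + b * 1) * ((Real.sqrt D)⁻¹ * (h' * z₀ - q' * y₀)) +
            (c * (H + u * y₀) + a * -(Q + u * z₀) + b * 0) * ((Real.sqrt D)⁻¹ * (q' * x₀)) +
          (c * (Q + u * z₀) + a * (H + u * y₀) + b * 0) * ((Real.sqrt D)⁻¹ * -(h' * x₀)))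
          * (2 * (D * Real.sqrt D))
        = 2 * D * (-(a * x₀ * (z₀ * q' + y₀ * h')) * u
            + (c * x₀ * (H * q' - Q * h') + b * (z₀ * h' - y₀ * q') - a * x₀ * (Q * q' + H * h'))) := by
    intro u
    field_simp
    ring
  have key : ∀ u : ℝ,
      ((c * (0 + u * x₀) + a * 0 + b * 1) * ((Real.sqrt D)⁻¹ * (h' * z₀ - q' * y₀)) +
            (c * (H + u * y₀) + a * -(Q + u * z₀) + b * 0) * ((Real.sqrt D)⁻¹ * (q' * x₀)) +
          (c * (Q + u * z₀) + a * (H + u * y₀) + b * 0) * ((Real.sqrt D)⁻¹ * -(h' * x₀)) =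
        (0 * (h' * z₀ - q' * y₀) + h'' * (q' * x₀) + q'' * -(h' * x₀)) / (2 * (D * Real.sqrt D)))
      ↔ 2 * D * (-(a * x₀ * (z₀ * q' + y₀ * h')) * u
            + (c * x₀ * (H * q' - Q * h') + b * (z₀ * h' - y₀ * q') - a * x₀ * (Q * q' + H * h')))
          = x₀ * (q' * h'' - q'' * h') := by
    intro u
    rw [eq_div_iff hne, hexp u]
    constructor <;> intro hE <;> linear_combination hE
  rw [forall_congr' key]
  constructor
  · intro hyp
    have E0 := hyp 0
    have E1 := hyp 1
    have hX : D * (a * x₀ * (z₀ * q' + y₀ * h')) = 0 := by linear_combination (E0 - E1) / 2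
    have hA : a * x₀ * (z₀ * q' + y₀ * h') = 0 := (mul_eq_zero.mp hX).resolve_left hDne
    refine ⟨hA, ?_⟩
    rw [eq_div_iff hDne]
    linear_combination E0
  · rintro ⟨hA, hB⟩ u
    rw [eq_div_iff hDne] at hB
    linear_combination hB - 2 * D * u * hA
end
end

section
/- Let X(s,u)=β(s)+u·w be a cylindrical ruled surface with β(s)=(h(s),q(s),0) a plane curve and w=(x₀,y₀,z₀) a constant unit vector, where h,q:I→ℝ are smooth and h'(s)²+q'(s)²−(x₀h'(s)+y₀q'(s))²>0 for all s∈I, and let a,b,c∈ℝ. Then the soliton equation ⟨c·X(s,u)+a·R(X(s,u))+b·e₁, N(s)⟩ = H(s) holds for all (s,u)∈I×ℝ if and only if for all s∈I both: (i) a·((1−x₀²)h'(s)−x₀y₀q'(s))=0, and (ii) 2c·z₀(h q'−q h') + 2b·z₀q' + 2a·q·(y₀h'−x₀q') = z₀(q'h''−q''h')/((h')²+(q')²−(x₀h'+y₀q')²). -/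
noncomputable section

private lemma core_algebra (x₀ y₀ z₀ hv qv h1 q1 h2 q2 a b c : ℝ)
    (hunit : x₀^2 + y₀^2 + z₀^2 = 1)
    (hE : 0 < h1 ^ 2 + q1 ^ 2 - (x₀ * h1 + y₀ * q1) ^ 2) :
    (∀ u : ℝ,
        dot3 (c • ((![hv, qv, 0] : Fin 3 → ℝ) + u • ![x₀,y₀,z₀])
              + a • (![0, -(((![hv, qv, 0] : Fin 3 → ℝ) + u • ![x₀,y₀,z₀]) 2), ((![hv, qv, 0] : Fin 3 → ℝ) + u • ![x₀,y₀,z₀]) 1] : Fin 3 → ℝ)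
              + b • (![1, 0, 0] : Fin 3 → ℝ))
            ((norm3 (cross3 ![h1,q1,0] ![x₀,y₀,z₀]))⁻¹ • cross3 ![h1,q1,0] ![x₀,y₀,z₀])
          = dot3 ![h2,q2,0] (cross3 ![h1,q1,0] ![x₀,y₀,z₀])
              / (2 * (norm3 ![h1,q1,0] ^ 2 - dot3 ![h1,q1,0] ![x₀,y₀,z₀] ^ 2) ^ ((3 : ℝ) / 2)))
      ↔ (a * ((1 - x₀ ^ 2) * h1 - x₀ * y₀ * q1) = 0 ∧
          2 * c * z₀ * (hv * q1 - qv * h1) + 2 * b * z₀ * q1 + 2 * a * qv * (y₀ * h1 - x₀ * q1)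
            = z₀ * (q1 * h2 - q2 * h1) / (h1 ^ 2 + q1 ^ 2 - (x₀ * h1 + y₀ * q1) ^ 2)) := by
  set E := h1 ^ 2 + q1 ^ 2 - (x₀ * h1 + y₀ * q1) ^ 2 with hEdef
  have hcross : cross3 ![h1,q1,0] ![x₀,y₀,z₀] = ![q1*z₀, -(h1*z₀), h1*y₀-q1*x₀] := by
    funext i; fin_cases i <;> simp [cross3]
  have hnc : norm3 (cross3 ![h1,q1,0] ![x₀,y₀,z₀]) = Real.sqrt E := by
    rw [hcross]; unfold norm3; congr 1; simp [dot3]; rw [hEdef]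
    linear_combination (h1^2+q1^2) * hunit
  have hn1 : norm3 ![h1,q1,0] ^ 2 - dot3 ![h1,q1,0] ![x₀,y₀,z₀] ^ 2 = E := by
    have : norm3 ![h1,q1,0] ^ 2 = h1^2 + q1^2 := by
      unfold norm3; rw [Real.sq_sqrt] <;> simp [dot3] <;> nlinarith
    rw [this]; simp [dot3, hEdef]; ring
  have hrw : E ^ ((3:ℝ)/2) = E * Real.sqrt E := by
    rw [show ((3:ℝ)/2) = 1 + 1/2 by norm_num, Real.rpow_add hE, Real.rpow_one,
      ← Real.sqrt_eq_rpow]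
  rw [hcross] at hnc
  simp only [hcross, hnc, hn1, hrw]
  have hS : 0 < Real.sqrt E := Real.sqrt_pos.mpr hE
  have hS2 : Real.sqrt E ^ 2 = E := Real.sq_sqrt hE.le
  simp only [dot3, Matrix.cons_val_zero, Matrix.cons_val_one, Matrix.head_cons, Pi.add_apply,
    Pi.smul_apply, smul_eq_mul, Matrix.cons_val_two, Matrix.tail_cons]
  have hSne : Real.sqrt E ≠ 0 := ne_of_gt hS
  have hEne : E ≠ 0 := ne_of_gt hE
  constructor
  · intro H
    have e0 := H 0
    have e1 := H 1
    field_simp at e0 e1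
    constructor
    · have hA : (a*(z₀^2*h1 + y₀^2*h1 - x₀*y₀*q1)) * (2*(E*Real.sqrt E)) = 0 := by
        linear_combination Real.sqrt E * (e1 - e0)
      have h2E : (2*(E*Real.sqrt E)) ≠ 0 := by positivity
      have hA0 : a*(z₀^2*h1 + y₀^2*h1 - x₀*y₀*q1) = 0 := (mul_eq_zero.mp hA).resolve_right h2E
      linear_combination hA0 - a*h1*hunit
    · rw [eq_div_iff hEne]
      have e0' : ((2 * c * z₀ * (hv * q1 - qv * h1) + 2 * b * z₀ * q1
          + 2 * a * qv * (y₀ * h1 - x₀ * q1)) * E - z₀*(q1*h2-q2*h1)) * Real.sqrt E = 0 := by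
        linear_combination Real.sqrt E * e0
      have := (mul_eq_zero.mp e0').resolve_right hSne
      linarith
  · rintro ⟨c1, c2⟩ u
    rw [eq_div_iff hEne] at c2
    field_simp
    linear_combination c2 + 2*E*u*c1 + 2*E*u*a*h1*hunit

/-- characterization of self-similar solutions of the MCF by cylindrical
ruled surfaces `X(s,u) = β(s) + u·w`, `β(s) = (h(s), q(s), 0)`, `w = (x₀,y₀,z₀)` a unit
vector, under a homothetic helicoidal motion about the x-axis with velocity field
`P ↦ c·P + a·R(P) + b·e₁`, `R(x,y,z) = (0,−z,y)`. -/
theorem cylindrical_soliton_iff_itemII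
    (I : Set ℝ) (hI : IsOpen I)
    (h q : ℝ → ℝ) (hh : ContDiffOn ℝ (⊤ : ℕ∞) h I) (hq : ContDiffOn ℝ (⊤ : ℕ∞) q I)
    (x₀ y₀ z₀ : ℝ)
    (β : ℝ → Fin 3 → ℝ) (hβdef : ∀ s, β s = ![h s, q s, 0])
    (w : Fin 3 → ℝ) (hwdef : w = ![x₀, y₀, z₀]) (hwunit : norm3 w = 1)
    (hreg : ∀ s ∈ I,
      0 < deriv h s ^ 2 + deriv q s ^ 2 - (x₀ * deriv h s + y₀ * deriv q s) ^ 2)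
    (a b c : ℝ) :
    (∀ s ∈ I, ∀ u : ℝ,
        dot3 (c • (β s + u • w)
              + a • (![0, -((β s + u • w) 2), (β s + u • w) 1] : Fin 3 → ℝ)
              + b • (![1, 0, 0] : Fin 3 → ℝ))
            ((norm3 (cross3 (deriv β s) w))⁻¹ • cross3 (deriv β s) w)
          = dot3 (deriv (deriv β) s) (cross3 (deriv β s) w)
              / (2 * (norm3 (deriv β s) ^ 2 - dot3 (deriv β s) w ^ 2) ^ ((3 : ℝ) / 2)))
      ↔ (∀ s ∈ I,
          a * ((1 - x₀ ^ 2) * deriv h s - x₀ * y₀ * deriv q s) = 0 ∧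
          2 * c * z₀ * (h s * deriv q s - q s * deriv h s)
              + 2 * b * z₀ * deriv q s
              + 2 * a * q s * (y₀ * deriv h s - x₀ * deriv q s)
            = z₀ * (deriv q s * deriv (deriv h) s - deriv (deriv q) s * deriv h s)
                / (deriv h s ^ 2 + deriv q s ^ 2
                    - (x₀ * deriv h s + y₀ * deriv q s) ^ 2)) := by
  obtain rfl : β = fun s => ![h s, q s, 0] := funext hβdef
  subst hwdef
  have hunit : x₀ ^ 2 + y₀ ^ 2 + z₀ ^ 2 = 1 := by
    have h1 : dot3 ![x₀, y₀, z₀] ![x₀, y₀, z₀] = x₀ ^ 2 + y₀ ^ 2 + z₀ ^ 2 := by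
      simp [dot3]; ring
    have h2 : (0:ℝ) ≤ x₀ ^ 2 + y₀ ^ 2 + z₀ ^ 2 := by positivity
    unfold norm3 at hwunit
    rw [h1] at hwunit
    nlinarith [Real.sq_sqrt h2, hwunit]
  have hh' : ContDiffOn ℝ (⊤ : ℕ∞) (deriv h) I := hh.deriv_of_isOpen hI (by simp)
  have hq' : ContDiffOn ℝ (⊤ : ℕ∞) (deriv q) I := hq.deriv_of_isOpen hI (by simp)
  have hd1 : ∀ s ∈ I, deriv (fun s => ![h s, q s, 0]) s = ![deriv h s, deriv q s, 0] := by
    intro s hs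
    have Dh : HasDerivAt h (deriv h s) s :=
      ((hh.contDiffAt (hI.mem_nhds hs)).differentiableAt (by simp)).hasDerivAt
    have Dq : HasDerivAt q (deriv q s) s :=
      ((hq.contDiffAt (hI.mem_nhds hs)).differentiableAt (by simp)).hasDerivAt
    refine HasDerivAt.deriv ?_
    rw [hasDerivAt_pi]
    intro i
    fin_cases i <;> simp <;>
      first
        | exact Dh.differentiableAt
        | exact Dq.differentiableAt
        | exact hasDerivAt_const s 0
  have hd2 : ∀ s ∈ I, deriv (deriv (fun s => ![h s, q s, 0])) s
      = ![deriv (deriv h) s, deriv (deriv q) s, 0] := by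
    intro s hs
    have heq : deriv (fun s => ![h s, q s, 0]) =ᶠ[nhds s]
        (fun t => ![deriv h t, deriv q t, 0]) := by
      filter_upwards [hI.mem_nhds hs] with t ht using hd1 t ht
    rw [heq.deriv_eq]
    have Dh : HasDerivAt (deriv h) (deriv (deriv h) s) s :=
      ((hh'.contDiffAt (hI.mem_nhds hs)).differentiableAt (by simp)).hasDerivAt
    have Dq : HasDerivAt (deriv q) (deriv (deriv q) s) s :=
      ((hq'.contDiffAt (hI.mem_nhds hs)).differentiableAt (by simp)).hasDerivAt
    refine HasDerivAt.deriv ?_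
    rw [hasDerivAt_pi]
    intro i
    fin_cases i <;> simp <;>
      first
        | exact Dh.differentiableAt
        | exact Dq.differentiableAt
        | exact hasDerivAt_const s 0
  refine forall₂_congr fun s hs => ?_
  rw [hd1 s hs, hd2 s hs]
  exact core_algebra x₀ y₀ z₀ (h s) (q s) (deriv h s) (deriv q s)
    (deriv (deriv h) s) (deriv (deriv q) s) a b c hunit (hreg s hs)
end
end

section
/- Let X(s,u)=β(s)+u·w(s) be a non-cylindrical ruled surface parametrized by its line of striction, and let c∈ℝ, A:ℝ³→ℝ³ a skew-symmetric linear map, and v∈ℝ³. Then the soliton equation ⟨c·X(s,u)+A(X(s,u))+v, N(s,u)⟩ = H(s,u) holds for all s∈I and all u∈ℝ with λ(s)²+u²>0 if and only if for all s∈I the following five identities hold: (i) ⟨A(w), w'×w⟩=0; (ii) λ⟨A(w),w'⟩+⟨A(β),w'×w⟩+⟨v,w'×w⟩+c⟨β,w'×w⟩=0; (iii) λ(⟨A(β),w'⟩+⟨v,w'⟩+c⟨β,w'⟩)+(1/2)⟨w×w',w''⟩=0; (iv) λ'(s)=0 (so λ is constant); (v) λ(s)·⟨β'(s),w(s)⟩=0.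 -/
noncomputable section

lemma dot3_smul_right' (x y : Fin 3 → ℝ) (r : ℝ) : dot3 x (r • y) = r * dot3 x y := by
  simp [dot3, Pi.smul_apply, smul_eq_mul]; ring

/-- The pointwise (in `s`) algebraic core of the soliton characterization. -/
lemma soliton_pointwise_key (b W W' Ab Aw v : Fin 3 → ℝ) (c l f jj dl : ℝ)
    (hww : dot3 W W' = 0) :
    (∀ u : ℝ, l ^ 2 + u ^ 2 > 0 →
        dot3 (c • (b + u • W) + (Ab + u • Aw) + v)
            ((Real.sqrt (l ^ 2 + u ^ 2))⁻¹ • (l • W' + u • cross3 W' W))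
          = -(l * f + l ^ 2 * jj + u * dl + u ^ 2 * jj)
              / (2 * (l ^ 2 + u ^ 2) ^ ((3 : ℝ) / 2)))
      ↔ (dot3 Aw (cross3 W' W) = 0 ∧
         l * dot3 Aw W' + dot3 Ab (cross3 W' W) + dot3 v (cross3 W' W)
            + c * dot3 b (cross3 W' W) = 0 ∧
         l * (dot3 Ab W' + dot3 v W' + c * dot3 b W') + (1 / 2) * jj = 0 ∧
         dl = 0 ∧ l * f = 0) := by
  have poly_iff : ∀ u : ℝ, l ^ 2 + u ^ 2 > 0 →
      ((dot3 (c • (b + u • W) + (Ab + u • Aw) + v)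
            ((Real.sqrt (l ^ 2 + u ^ 2))⁻¹ • (l • W' + u • cross3 W' W))
          = -(l * f + l ^ 2 * jj + u * dl + u ^ 2 * jj)
              / (2 * (l ^ 2 + u ^ 2) ^ ((3 : ℝ) / 2)))
        ↔ 2 * (l ^ 2 + u ^ 2) * dot3 (c • (b + u • W) + (Ab + u • Aw) + v)
              (l • W' + u • cross3 W' W)
            + (l * f + l ^ 2 * jj + u * dl + u ^ 2 * jj) = 0) := by
    intro u hu
    have hs : Real.sqrt (l ^ 2 + u ^ 2) > 0 := Real.sqrt_pos.mpr hu
    have hpow : (l ^ 2 + u ^ 2) ^ ((3 : ℝ) / 2)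
        = (l ^ 2 + u ^ 2) * Real.sqrt (l ^ 2 + u ^ 2) := by
      rw [show (3 : ℝ) / 2 = 1 + 1 / 2 by norm_num, Real.rpow_add hu, Real.rpow_one,
        Real.sqrt_eq_rpow]
    rw [dot3_smul_right', hpow]
    set D := dot3 (c • (b + u • W) + (Ab + u • Aw) + v) (l • W' + u • cross3 W' W) with hD
    rw [inv_mul_eq_div, div_eq_div_iff hs.ne' (by positivity)]
    constructor
    · intro h
      have h2 : D * (2 * (l ^ 2 + u ^ 2)) * Real.sqrt (l ^ 2 + u ^ 2)
          = (-(l * f + l ^ 2 * jj + u * dl + u ^ 2 * jj)) * Real.sqrt (l ^ 2 + u ^ 2) := by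
        rw [← h]; ring
      have h3 := mul_right_cancel₀ hs.ne' h2
      linarith
    · intro h
      have : D * (2 * (l ^ 2 + u ^ 2)) = -(l * f + l ^ 2 * jj + u * dl + u ^ 2 * jj) := by
        linarith
      rw [show D * (2 * ((l ^ 2 + u ^ 2) * Real.sqrt (l ^ 2 + u ^ 2)))
          = D * (2 * (l ^ 2 + u ^ 2)) * Real.sqrt (l ^ 2 + u ^ 2) by ring, this]
  constructor
  · intro h
    have p : ∀ u : ℝ, l ^ 2 + u ^ 2 > 0 →
        2 * (l ^ 2 + u ^ 2) * dot3 (c • (b + u • W) + (Ab + u • Aw) + v)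
              (l • W' + u • cross3 W' W)
            + (l * f + l ^ 2 * jj + u * dl + u ^ 2 * jj) = 0 :=
      fun u hu => (poly_iff u hu).mp (h u hu)
    have p1 := p 1 (by positivity)
    have p2 := p 2 (by positivity)
    have p3 := p 3 (by positivity)
    have p4 := p 4 (by positivity)
    have p5 := p 5 (by positivity)
    simp only [dot3, cross3, Pi.add_apply, Pi.smul_apply, smul_eq_mul,
      Matrix.cons_val_zero, Matrix.cons_val_one, Matrix.head_cons,
      Matrix.cons_val_two, Matrix.tail_cons] at p1 p2 p3 p4 p5 hww ⊢
    refine ⟨?_, ?_, ?_, ?_, ?_⟩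
    · linear_combination (1/48) * p1 - (1/12) * p2 + (1/8) * p3 - (1/12) * p4 + (1/48) * p5
    · linear_combination (-7/24) * p1 + (13/12) * p2 - (3/2) * p3 + (11/12) * p4 - (5/24) * p5
        - c * l * hww
    · linear_combination ((71/24 - l^2 * (1/24))/2) * p1 + ((-59/6 - l^2 * (-1/6))/2) * p2
        + ((49/4 - l^2 * (1/4))/2) * p3 + ((-41/6 - l^2 * (-1/6))/2) * p4
        + ((35/24 - l^2 * (1/24))/2) * p5
    · linear_combination (-77/12 - l^2 * (-7/12)) * p1 + (107/6 - l^2 * (13/6)) * p2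
        + (-39/2 - l^2 * (-3)) * p3 + (61/6 - l^2 * (11/6)) * p4
        + (-25/12 - l^2 * (-5/12)) * p5
    · linear_combination (5 - l^2 * (71/24) + l^4 * (1/24)) * p1
        + (-10 - l^2 * (-59/6) + l^4 * (-1/6)) * p2
        + (10 - l^2 * (49/4) + l^4 * (1/4)) * p3
        + (-5 - l^2 * (-41/6) + l^4 * (-1/6)) * p4
        + (1 - l^2 * (35/24) + l^4 * (1/24)) * p5
  · rintro ⟨h1, h2, h3, h4, h5⟩ u hu
    apply (poly_iff u hu).mpr
    simp only [dot3, cross3, Pi.add_apply, Pi.smul_apply, smul_eq_mul,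
      Matrix.cons_val_zero, Matrix.cons_val_one, Matrix.head_cons,
      Matrix.cons_val_two, Matrix.tail_cons] at h1 h2 h3 hww ⊢
    linear_combination 2 * (l ^ 2 + u ^ 2) * u ^ 2 * h1 + 2 * (l ^ 2 + u ^ 2) * u * h2
      + 2 * (l ^ 2 + u ^ 2) * h3 + u * h4 + h5 + 2 * c * l * (u ^ 3 + l ^ 2 * u) * hww

/-- the soliton equation for a non-cylindrical ruled surface
`X(s,u) = β(s) + u·w(s)` parametrized by its line of striction holds if and only if
the five identities (i)–(v) hold for all `s ∈ I`. -/
theorem noncylindrical_ruled_soliton_iff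
    (I : Set ℝ) (hI : IsOpen I)
    (β w : ℝ → Fin 3 → ℝ)
    (hβ : ContDiffOn ℝ (⊤ : ℕ∞) β I) (hw : ContDiffOn ℝ (⊤ : ℕ∞) w I)
    (hwunit : ∀ s ∈ I, norm3 (w s) = 1)
    (hw'unit : ∀ s ∈ I, norm3 (deriv w s) = 1)
    (hstriction : ∀ s ∈ I, dot3 (deriv β s) (deriv w s) = 0)
    (c : ℝ) (A : (Fin 3 → ℝ) →ₗ[ℝ] (Fin 3 → ℝ))
    (hA : ∀ x y : Fin 3 → ℝ, dot3 (A x) y = - dot3 x (A y))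
    (v : Fin 3 → ℝ) :
    (∀ s ∈ I, ∀ u : ℝ, lam3 β w s ^ 2 + u ^ 2 > 0 →
        dot3 (c • (β s + u • w s) + A (β s + u • w s) + v)
            ((Real.sqrt (lam3 β w s ^ 2 + u ^ 2))⁻¹ •
              (lam3 β w s • deriv w s + u • cross3 (deriv w s) (w s)))
          = -(lam3 β w s * Fcoef β w s + lam3 β w s ^ 2 * Jcoef w s
                + u * deriv (lam3 β w) s + u ^ 2 * Jcoef w s)
              / (2 * (lam3 β w s ^ 2 + u ^ 2) ^ ((3 : ℝ) / 2)))
      ↔ (∀ s ∈ I,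
          dot3 (A (w s)) (cross3 (deriv w s) (w s)) = 0 ∧
          lam3 β w s * dot3 (A (w s)) (deriv w s)
              + dot3 (A (β s)) (cross3 (deriv w s) (w s))
              + dot3 v (cross3 (deriv w s) (w s))
              + c * dot3 (β s) (cross3 (deriv w s) (w s)) = 0 ∧
          lam3 β w s * (dot3 (A (β s)) (deriv w s) + dot3 v (deriv w s)
                + c * dot3 (β s) (deriv w s))
              + (1 / 2) * Jcoef w s = 0 ∧
          deriv (lam3 β w) s = 0 ∧
          lam3 β w s * dot3 (deriv β s) (w s) = 0) := by
  refine forall₂_congr fun s hs => ?_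
  -- ⟨w s, w' s⟩ = 0 from ‖w‖ ≡ 1 on the open set I
  have hdw : DifferentiableAt ℝ w s :=
    (hw.contDiffAt (hI.mem_nhds hs)).differentiableAt (by simp)
  have hcomp := hasDerivAt_pi.mp hdw.hasDerivAt
  have h0 := hcomp 0
  have h1 := hcomp 1
  have h2 := hcomp 2
  have hgd := ((h0.mul h0).add (h1.mul h1)).add (h2.mul h2)
  have hconst : HasDerivAt
      (fun t => w t 0 * w t 0 + w t 1 * w t 1 + w t 2 * w t 2) 0 s := by
    apply (hasDerivAt_const s (1 : ℝ)).congr_of_eventuallyEq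
    filter_upwards [hI.mem_nhds hs] with t ht
    have hnorm := hwunit t ht
    have : dot3 (w t) (w t) = 1 := Real.sqrt_eq_one.mp hnorm
    simpa [dot3] using this
  have huniq := hgd.unique hconst
  have hww : dot3 (w s) (deriv w s) = 0 := by
    simp only [dot3]; linarith
  have K := soliton_pointwise_key (β s) (w s) (deriv w s) (A (β s)) (A (w s)) v c
    (lam3 β w s) (dot3 (deriv β s) (w s)) (Jcoef w s) (deriv (lam3 β w) s) hww
  simp only [Fcoef, map_add, map_smul]
  exact K
end
end

section
/- Let X(s,u)=β(s)+u·w be a cylindrical ruled surface, and let c∈ℝ, A:ℝ³→ℝ³ a skew-symmetric linear map, and v∈ℝ³. Then the soliton equation ⟨c·X(s,u)+A(X(s,u))+v, N(s)⟩ = H(s) holds for all (s,u)∈I×ℝ if and only if for all s∈I both: (i) ⟨A(w), β'(s)×w⟩=0, and (ii) ⟨c·β(s)+A(β(s))+v, β'(s)×w⟩ = ⟨β''(s), β'(s)×w⟩ / (2(‖β'(s)‖²−⟨β'(s),w⟩²)). -/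
noncomputable section

lemma dot3_self_nonneg (x : Fin 3 → ℝ) : 0 ≤ dot3 x x := by
  unfold dot3; nlinarith [sq_nonneg (x 0), sq_nonneg (x 1), sq_nonneg (x 2)]

lemma norm3_sq (x : Fin 3 → ℝ) : norm3 x ^ 2 = dot3 x x := by
  unfold norm3; exact Real.sq_sqrt (dot3_self_nonneg x)

lemma dot3_self_pos (x : Fin 3 → ℝ) (hx : x ≠ 0) : 0 < dot3 x x := by
  rcases lt_or_eq_of_le (dot3_self_nonneg x) with h | h
  · exact h
  · exfalso; apply hx
    have h0 : x 0 = 0 := by unfold dot3 at h; nlinarith [sq_nonneg (x 0), sq_nonneg (x 1), sq_nonneg (x 2)]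
    have h1 : x 1 = 0 := by unfold dot3 at h; nlinarith [sq_nonneg (x 0), sq_nonneg (x 1), sq_nonneg (x 2)]
    have h2 : x 2 = 0 := by unfold dot3 at h; nlinarith [sq_nonneg (x 0), sq_nonneg (x 1), sq_nonneg (x 2)]
    funext i; fin_cases i <;> assumption

/-- the soliton equation for a cylindrical ruled surface
`X(s,u) = β(s) + u·w` (with `w` a constant unit vector) holds if and only if
the two identities (i) and (ii) hold for all `s ∈ I`. -/
theorem cylindrical_ruled_soliton_iff
    (I : Set ℝ) (hI : IsOpen I)
    (β : ℝ → Fin 3 → ℝ) (hβ : ContDiffOn ℝ (⊤ : ℕ∞) β I)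
    (w : Fin 3 → ℝ) (hwunit : norm3 w = 1)
    (hreg : ∀ s ∈ I, cross3 (deriv β s) w ≠ 0)
    (c : ℝ) (A : (Fin 3 → ℝ) →ₗ[ℝ] (Fin 3 → ℝ))
    (hA : ∀ x y : Fin 3 → ℝ, dot3 (A x) y = - dot3 x (A y))
    (v : Fin 3 → ℝ) :
    (∀ s ∈ I, ∀ u : ℝ,
        dot3 (c • (β s + u • w) + A (β s + u • w) + v)
            ((norm3 (cross3 (deriv β s) w))⁻¹ • cross3 (deriv β s) w)
          = dot3 (deriv (deriv β) s) (cross3 (deriv β s) w)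
              / (2 * (norm3 (deriv β s) ^ 2 - dot3 (deriv β s) w ^ 2) ^ ((3 : ℝ) / 2)))
      ↔ (∀ s ∈ I,
          dot3 (A w) (cross3 (deriv β s) w) = 0 ∧
          dot3 (c • β s + A (β s) + v) (cross3 (deriv β s) w)
            = dot3 (deriv (deriv β) s) (cross3 (deriv β s) w)
                / (2 * (norm3 (deriv β s) ^ 2 - dot3 (deriv β s) w ^ 2))) := by
  have hww : dot3 w w = 1 := by
    have := norm3_sq w; rw [hwunit] at this; linarith
  have main : ∀ s ∈ I,
      ((∀ u : ℝ,
        dot3 (c • (β s + u • w) + A (β s + u • w) + v)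
            ((norm3 (cross3 (deriv β s) w))⁻¹ • cross3 (deriv β s) w)
          = dot3 (deriv (deriv β) s) (cross3 (deriv β s) w)
              / (2 * (norm3 (deriv β s) ^ 2 - dot3 (deriv β s) w ^ 2) ^ ((3 : ℝ) / 2)))
      ↔ (dot3 (A w) (cross3 (deriv β s) w) = 0 ∧
          dot3 (c • β s + A (β s) + v) (cross3 (deriv β s) w)
            = dot3 (deriv (deriv β) s) (cross3 (deriv β s) w)
                / (2 * (norm3 (deriv β s) ^ 2 - dot3 (deriv β s) w ^ 2)))) := by
    intro s hs
    set b := deriv β s with hb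
    set E := cross3 b w with hE
    set n := norm3 E with hn
    set K := dot3 (deriv (deriv β) s) E with hK
    set D := dot3 (c • β s + A (β s) + v) E with hD
    set a := dot3 (A w) E with ha
    have hEne : E ≠ 0 := hreg s hs
    have hEE : 0 < dot3 E E := dot3_self_pos E hEne
    have hnpos : 0 < n := by rw [hn]; exact Real.sqrt_pos.mpr hEE
    have hn2 : n ^ 2 = dot3 E E := norm3_sq E
    -- Lagrange identity
    have hlag : norm3 b ^ 2 - dot3 b w ^ 2 = n ^ 2 := by
      rw [hn2, norm3_sq]
      have : dot3 E E = dot3 b b * dot3 w w - dot3 b w ^ 2 := by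
        simp only [hE, dot3, cross3, Matrix.cons_val_zero, Matrix.cons_val_one,
          Matrix.head_cons, Matrix.cons_val_two, Matrix.tail_cons]
        ring
      rw [this, hww]; ring
    have hrpow : (norm3 b ^ 2 - dot3 b w ^ 2) ^ ((3 : ℝ) / 2) = n ^ 3 := by
      rw [hlag, ← Real.rpow_natCast n 2, ← Real.rpow_mul hnpos.le,
        ← Real.rpow_natCast n 3]
      norm_num
    -- key computation of left side
    have key : ∀ u : ℝ,
        dot3 (c • (β s + u • w) + A (β s + u • w) + v) (n⁻¹ • E)
          = n⁻¹ * (D + u * a) := by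
      intro u
      have hAadd : A (β s + u • w) = A (β s) + u • A w := by
        rw [map_add, map_smul]
      simp only [hAadd, hD, ha, hE, dot3, cross3, Pi.add_apply, Pi.smul_apply,
        smul_eq_mul, Matrix.cons_val_zero, Matrix.cons_val_one, Matrix.head_cons,
        Matrix.cons_val_two, Matrix.tail_cons]
      ring
    rw [show (2 * (norm3 b ^ 2 - dot3 b w ^ 2) ^ ((3 : ℝ) / 2)) = 2 * n ^ 3 by rw [hrpow],
      show (2 * (norm3 b ^ 2 - dot3 b w ^ 2)) = 2 * n ^ 2 by rw [hlag]]
    constructor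
    · intro h
      have h0 := h 0
      have h1 := h 1
      rw [key] at h0 h1
      have haz : a = 0 := by
        have : n⁻¹ * (D + 1 * a) = n⁻¹ * (D + 0 * a) := by rw [h0, h1]
        have hninv : n⁻¹ ≠ 0 := inv_ne_zero hnpos.ne'
        field_simp at this
        linarith
      refine ⟨haz, ?_⟩
      rw [show D + 0 * a = D by ring] at h0
      rw [eq_div_iff (by positivity : (2 * n ^ 2 : ℝ) ≠ 0)]
      rw [inv_mul_eq_div, div_eq_div_iff hnpos.ne' (by positivity : (2 * n ^ 3 : ℝ) ≠ 0)] at h0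
      apply mul_right_cancel₀ hnpos.ne'
      linear_combination h0
    · rintro ⟨haz, hDeq⟩ u
      rw [key, haz]
      rw [show D + u * 0 = D by ring, hDeq]
      rw [inv_mul_eq_div, div_div, div_eq_div_iff (by positivity) (by positivity)]
      ring
  constructor
  · intro h s hs; exact (main s hs).mp (h s hs)
  · intro h s hs; exact (main s hs).mpr (h s hs)
end
end

section
/- The function q(s) = (2/3)·log((3/4)·(sin((√3/2)s) − cos((√3/2)s))²) is smooth and satisfies q''(s) = −1 − (3/4)·q'(s)² at every s with sin((√3/2)s) ≠ cos((√3/2)s). Consequently the cylindrical surface X(s,u)=(u, s, u/2 + q(s)) is a grim-reaper-type translating self-similar solution of the mean curvature flow. -/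
noncomputable section GrimAux

private def gk : ℝ := Real.sqrt 3 / 2

private lemma gk_sq : gk ^ 2 = 3 / 4 := by
  simp [gk, div_pow, Real.sq_sqrt (by norm_num : (3:ℝ) ≥ 0)]; norm_num

private def gf (s : ℝ) : ℝ := Real.sin (gk * s) - Real.cos (gk * s)

private lemma hgf (s : ℝ) :
    HasDerivAt gf (gk * (Real.cos (gk * s) + Real.sin (gk * s))) s := by
  have h1 : HasDerivAt (fun s : ℝ => gk * s) gk s := by
    simpa using (hasDerivAt_id s).const_mul gk
  have hs := (Real.hasDerivAt_sin (gk * s)).comp s h1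
  have hc := (Real.hasDerivAt_cos (gk * s)).comp s h1
  have := hs.sub hc
  exact this.congr_deriv (by ring)

private def gq (s : ℝ) : ℝ := 2 / 3 * Real.log (3 / 4 * gf s ^ 2)

private def gg (s : ℝ) : ℝ :=
  4 / 3 * (gk * (Real.cos (gk * s) + Real.sin (gk * s))) / gf s

private lemma hgq {s : ℝ} (hs : gf s ≠ 0) : HasDerivAt gq (gg s) s := by
  have hinner : HasDerivAt (fun s => 3 / 4 * gf s ^ 2)
      (3 / 4 * (2 * gf s ^ 1 * (gk * (Real.cos (gk * s) + Real.sin (gk * s))))) s :=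
    ((hgf s).pow 2).const_mul (3 / 4)
  have hne : 3 / 4 * gf s ^ 2 ≠ 0 := by positivity
  have hlog := (hinner.log hne).const_mul (2 / 3)
  refine hlog.congr_deriv ?_
  unfold gg
  field_simp
  ring

private lemma hgg {s : ℝ} (hs : gf s ≠ 0) :
    HasDerivAt gg (-1 - 3 / 4 * gg s ^ 2) s := by
  have hN : HasDerivAt
      (fun s => 4 / 3 * (gk * (Real.cos (gk * s) + Real.sin (gk * s))))
      (4 / 3 * (gk * (gk * (-Real.sin (gk * s) + Real.cos (gk * s))))) s := by
    have h1 : HasDerivAt (fun s : ℝ => gk * s) gk s := by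
      simpa using (hasDerivAt_id s).const_mul gk
    have hc := (Real.hasDerivAt_cos (gk * s)).comp s h1
    have hsn := (Real.hasDerivAt_sin (gk * s)).comp s h1
    have := ((hc.add hsn).const_mul gk).const_mul (4 / 3)
    exact this.congr_deriv (by ring)
  have := hN.div (hgf s) hs
  refine this.congr_deriv ?_
  unfold gg gf at *
  set a := Real.sin (gk * s)
  set b := Real.cos (gk * s)
  field_simp
  linear_combination (48 * (8*a*b - 12*a*b^3 + 18*a^2*b^2 - 4*a^2 - 12*a^3*b
    + 3*a^4 - 4*b^2 + 3*b^4) + 192 * (a-b)^2 - 288 * (a-b)^4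
    + (8*a*b - 576*a*b^3 - 4*a^2 + 864*a^2*b^2 - 576*a^3*b + 144*a^4 - 4*b^2 + 144*b^4)) * gk_sq

end GrimAux

/-- the function
`q(s) = (2/3)·log((3/4)·(sin((√3/2)s) − cos((√3/2)s))²)` is smooth wherever
`sin((√3/2)s) ≠ cos((√3/2)s)` and satisfies the grim-reaper-type translating-soliton
equation `q'' = −1 − (3/4)·(q')²` there, so that the cylindrical surface
`X(s,u) = (u, s, u/2 + q(s))` is a translating self-similar solution of the mean
curvature flow. -/
theorem grim_reaper_translating_soliton :
    ContDiffOn ℝ (⊤ : ℕ∞)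
      (fun s : ℝ => 2 / 3 * Real.log (3 / 4 *
        (Real.sin (Real.sqrt 3 / 2 * s) - Real.cos (Real.sqrt 3 / 2 * s)) ^ 2))
      {s : ℝ | Real.sin (Real.sqrt 3 / 2 * s) ≠ Real.cos (Real.sqrt 3 / 2 * s)} ∧
    ∀ s : ℝ, Real.sin (Real.sqrt 3 / 2 * s) ≠ Real.cos (Real.sqrt 3 / 2 * s) →
      deriv (deriv (fun s : ℝ => 2 / 3 * Real.log (3 / 4 *
          (Real.sin (Real.sqrt 3 / 2 * s) - Real.cos (Real.sqrt 3 / 2 * s)) ^ 2))) s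
        = -1 - 3 / 4 *
            (deriv (fun s : ℝ => 2 / 3 * Real.log (3 / 4 *
              (Real.sin (Real.sqrt 3 / 2 * s) - Real.cos (Real.sqrt 3 / 2 * s)) ^ 2)) s) ^ 2 := by
  have hqi : (fun s : ℝ => 2 / 3 * Real.log (3 / 4 *
      (Real.sin (Real.sqrt 3 / 2 * s) - Real.cos (Real.sqrt 3 / 2 * s)) ^ 2)) = gq := by
    funext s; simp [gq, gf, gk]
  have hSf : ∀ s : ℝ,
      Real.sin (Real.sqrt 3 / 2 * s) ≠ Real.cos (Real.sqrt 3 / 2 * s) → gf s ≠ 0 := by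
    intro s hs
    simpa [gf, gk, sub_ne_zero] using hs
  rw [hqi]
  constructor
  · have hc : ContDiff ℝ (⊤ : ℕ∞) (fun s => 3 / 4 * gf s ^ 2) := by
      have hlin : ContDiff ℝ (⊤ : ℕ∞) (fun s : ℝ => gk * s) := contDiff_const.mul contDiff_id
      unfold gf
      exact contDiff_const.mul
        (((Real.contDiff_sin.comp hlin).sub (Real.contDiff_cos.comp hlin)).pow 2)
    have h2 : ContDiffOn ℝ (⊤ : ℕ∞) (fun s => Real.log (3 / 4 * gf s ^ 2))
        {s : ℝ | Real.sin (Real.sqrt 3 / 2 * s) ≠ Real.cos (Real.sqrt 3 / 2 * s)} := by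
      apply ContDiffOn.log hc.contDiffOn
      intro s hs
      have := hSf s hs
      positivity
    exact ContDiffOn.congr (h2.const_smul (2 / 3 : ℝ))
      (fun s _ => by simp only [gq, Pi.smul_apply, smul_eq_mul])
  · intro s hs
    have hS : IsOpen {s : ℝ | Real.sin (Real.sqrt 3 / 2 * s) ≠ Real.cos (Real.sqrt 3 / 2 * s)} :=
      isOpen_ne_fun (by continuity) (by continuity)
    have hev : deriv gq =ᶠ[nhds s] gg := by
      filter_upwards [hS.mem_nhds hs] with x hx
      exact (hgq (hSf x hx)).deriv
    rw [hev.deriv_eq, (hgg (hSf s hs)).deriv, (hgq (hSf s hs)).deriv]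
end

section
/- The function q(s) = (4√3/3)·arctan((1/2)·√(exp(3s/4) − 4)), defined for s > (4/3)·log 4, is smooth there and satisfies q''(s) = −(1/2)·q'(s)·(3/4 + q'(s)²) for all s > (4/3)·log 4; equivalently, it solves the translating-soliton equation y₀·q'·(1+(q')²−y₀²) = x₀·q'' with x₀=−1 and y₀=1/2. Consequently the cylindrical surface X(s,u)=(−u, s+u/2, q(s)) is a translating self-similar solution of the mean curvature flow. -/
open Real Set

noncomputable def qfun : ℝ → ℝ := fun s : ℝ => 4 * Real.sqrt 3 / 3 *
  Real.arctan (1 / 2 * Real.sqrt (Real.exp (3 * s / 4) - 4))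

noncomputable def qd (s : ℝ) : ℝ := Real.sqrt 3 / Real.sqrt (Real.exp (3 * s / 4) - 4)

noncomputable def qdd (s : ℝ) : ℝ :=
  -(3 * Real.sqrt 3 * Real.exp (3 * s / 4)) / (8 * (Real.sqrt (Real.exp (3 * s / 4) - 4)) ^ 3)

lemma hEpos {s : ℝ} (hs : s ∈ Set.Ioi (4 / 3 * Real.log 4)) :
    0 < Real.exp (3 * s / 4) - 4 := by
  have h : Real.log 4 < 3 * s / 4 := by
    have := hs
    simp only [Set.mem_Ioi] at this
    linarith
  have := Real.exp_lt_exp.mpr h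
  rw [Real.exp_log (by norm_num : (0:ℝ) < 4)] at this
  linarith

lemma hasDerivAt_inner {s : ℝ} :
    HasDerivAt (fun s : ℝ => Real.exp (3 * s / 4) - 4) (3 / 4 * Real.exp (3 * s / 4)) s := by
  have h1 : HasDerivAt (fun s : ℝ => 3 * s / 4) (3 / 4) s := by
    simpa using (hasDerivAt_id s).const_mul (3:ℝ) |>.div_const 4
  have := (Real.hasDerivAt_exp (3 * s / 4)).comp s h1
  simpa [mul_comm] using this.sub_const 4

lemma hq1 {s : ℝ} (hpos : 0 < Real.exp (3 * s / 4) - 4) :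
    HasDerivAt qfun (qd s) s := by
  set E := Real.exp (3 * s / 4) with hE
  set r := Real.sqrt (E - 4) with hr
  have hrpos : 0 < r := Real.sqrt_pos.mpr hpos
  have hr2 : r ^ 2 = E - 4 := Real.sq_sqrt hpos.le
  have hEpos' : (0:ℝ) < E := Real.exp_pos _
  have hsq : HasDerivAt (fun s : ℝ => Real.sqrt (Real.exp (3 * s / 4) - 4))
      (3 / 4 * E / (2 * r)) s := hasDerivAt_inner.sqrt (ne_of_gt hpos)
  have hsq2 := hsq.const_mul (1/2 : ℝ)
  have harc := hsq2.arctan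
  have := harc.const_mul (4 * Real.sqrt 3 / 3)
  convert this using 1
  have h3 : (0:ℝ) < Real.sqrt 3 := Real.sqrt_pos.mpr (by norm_num)
  show qd s = _
  rw [qd]
  rw [show Real.sqrt (Real.exp (3 * s / 4) - 4) = r from rfl]
  field_simp
  linear_combination hr2
  all_goals rfl

lemma hq2 {s : ℝ} (hpos : 0 < Real.exp (3 * s / 4) - 4) :
    HasDerivAt qd (qdd s) s := by
  set E := Real.exp (3 * s / 4) with hE
  set r := Real.sqrt (E - 4) with hr
  have hrpos : 0 < r := Real.sqrt_pos.mpr hpos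
  have hr2 : r ^ 2 = E - 4 := Real.sq_sqrt hpos.le
  have hsq : HasDerivAt (fun s : ℝ => Real.sqrt (Real.exp (3 * s / 4) - 4))
      (3 / 4 * E / (2 * r)) s := hasDerivAt_inner.sqrt (ne_of_gt hpos)
  have hdiv := (hasDerivAt_const s (Real.sqrt 3)).div hsq (ne_of_gt hrpos)
  have : HasDerivAt qd ((0 * r - Real.sqrt 3 * (3 / 4 * E / (2 * r))) / r ^ 2) s := hdiv
  convert this using 1
  show qdd s = _
  rw [qdd]
  rw [show Real.sqrt (Real.exp (3 * s / 4) - 4) = r from rfl]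
  field_simp
  ring

lemma hode {s : ℝ} (hpos : 0 < Real.exp (3 * s / 4) - 4) :
    qdd s = -(1/2) * qd s * (3/4 + (qd s)^2) := by
  set E := Real.exp (3 * s / 4) with hE
  set r := Real.sqrt (E - 4) with hr
  have hrpos : 0 < r := Real.sqrt_pos.mpr hpos
  have hr2 : r ^ 2 = E - 4 := Real.sq_sqrt hpos.le
  rw [qdd, qd]
  rw [show Real.sqrt (Real.exp (3 * s / 4) - 4) = r from rfl]
  field_simp
  linear_combination 24 * hr2 + 32 * (Real.sq_sqrt (by norm_num : (0:ℝ) ≤ 3)) + (24 + 24 * Real.sqrt 3 * r ^ 3) * hE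

/-- the function `q(s) = (4√3/3)·arctan((1/2)·√(exp(3s/4) − 4))` is smooth
on `s > (4/3)·log 4` and satisfies `q'' = −(1/2)·q'·(3/4 + (q')²)` there; equivalently,
it solves the translating-soliton equation `y₀·q'·(1 + (q')² − y₀²) = x₀·q''` with
`x₀ = −1`, `y₀ = 1/2`, so that the cylindrical surface `X(s,u) = (−u, s+u/2, q(s))` is a
translating self-similar solution of the mean curvature flow. -/
theorem arctan_translating_soliton :
    ContDiffOn ℝ (⊤ : ℕ∞)
      (fun s : ℝ => 4 * Real.sqrt 3 / 3 *
        Real.arctan (1 / 2 * Real.sqrt (Real.exp (3 * s / 4) - 4)))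
      (Set.Ioi (4 / 3 * Real.log 4)) ∧
    ∀ s ∈ Set.Ioi (4 / 3 * Real.log 4),
      deriv (deriv (fun s : ℝ => 4 * Real.sqrt 3 / 3 *
          Real.arctan (1 / 2 * Real.sqrt (Real.exp (3 * s / 4) - 4)))) s
        = -(1 / 2) * deriv (fun s : ℝ => 4 * Real.sqrt 3 / 3 *
            Real.arctan (1 / 2 * Real.sqrt (Real.exp (3 * s / 4) - 4))) s
          * (3 / 4 + (deriv (fun s : ℝ => 4 * Real.sqrt 3 / 3 *
              Real.arctan (1 / 2 * Real.sqrt (Real.exp (3 * s / 4) - 4))) s) ^ 2) ∧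
      (1 / 2 : ℝ) * deriv (fun s : ℝ => 4 * Real.sqrt 3 / 3 *
          Real.arctan (1 / 2 * Real.sqrt (Real.exp (3 * s / 4) - 4))) s
          * (1 + (deriv (fun s : ℝ => 4 * Real.sqrt 3 / 3 *
              Real.arctan (1 / 2 * Real.sqrt (Real.exp (3 * s / 4) - 4))) s) ^ 2
            - (1 / 2 : ℝ) ^ 2)
        = (-1 : ℝ) * deriv (deriv (fun s : ℝ => 4 * Real.sqrt 3 / 3 *
            Real.arctan (1 / 2 * Real.sqrt (Real.exp (3 * s / 4) - 4)))) s := by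
  have key : ∀ s ∈ Set.Ioi (4 / 3 * Real.log 4),
      deriv qfun s = qd s ∧ deriv (deriv qfun) s = qdd s := by
    intro s hs
    have h1 : deriv qfun s = qd s := (hq1 (hEpos hs)).deriv
    refine ⟨h1, ?_⟩
    have hev : deriv qfun =ᶠ[nhds s] qd := by
      filter_upwards [isOpen_Ioi.eventually_mem hs] with x hx
      exact (hq1 (hEpos hx)).deriv
    rw [hev.deriv_eq]
    exact (hq2 (hEpos hs)).deriv
  constructor
  · intro s hs
    have hpos := hEpos hs
    have h1 : ContDiffAt ℝ (⊤ : ℕ∞) (fun s : ℝ => Real.exp (3 * s / 4) - 4) s := by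
      apply ContDiffAt.sub
      · exact (Real.contDiff_exp.comp ((contDiff_const.mul contDiff_id).div_const 4 : ContDiff ℝ (⊤ : ℕ∞) (fun s : ℝ => 3 * s / 4))).contDiffAt
      · exact contDiffAt_const
    have h2 : ContDiffAt ℝ (⊤ : ℕ∞) (fun s : ℝ => Real.sqrt (Real.exp (3 * s / 4) - 4)) s :=
      (Real.contDiffAt_sqrt (ne_of_gt hpos)).comp s h1
    have h3 : ContDiffAt ℝ (⊤ : ℕ∞) (fun s : ℝ => Real.arctan (1 / 2 * Real.sqrt (Real.exp (3 * s / 4) - 4))) s :=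
      Real.contDiff_arctan.contDiffAt.comp s (h2.const_smul (1/2 : ℝ) |>.congr_of_eventuallyEq (by
        filter_upwards with x; simp [smul_eq_mul]))
    exact (h3.const_smul (4 * Real.sqrt 3 / 3) |>.congr_of_eventuallyEq (by
      filter_upwards with x; simp [smul_eq_mul])).contDiffWithinAt
  · intro s hs
    obtain ⟨h1, h2⟩ := key s hs
    have e1 : deriv (fun s : ℝ => 4 * Real.sqrt 3 / 3 *
        Real.arctan (1 / 2 * Real.sqrt (Real.exp (3 * s / 4) - 4))) s = qd s := h1
    have e2 : deriv (deriv (fun s : ℝ => 4 * Real.sqrt 3 / 3 *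
        Real.arctan (1 / 2 * Real.sqrt (Real.exp (3 * s / 4) - 4)))) s = qdd s := h2
    rw [e1, e2, hode (hEpos hs)]
    constructor
    · rfl
    · ring
end
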